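/- arXiv:1303.4408 — 8 statements merged into one kernel-verified Lean document; each statement's English description precedes it below -/
import Mathlib

section
/- For every property P computable in the limit over a recursively enumerable class A of recursively enumerable sequences, there is an equivalent property P' computable in the limit over the class A_Z of constant sequences, such that for every index x of a sequence in A there exists an index y of a constant sequence in A_Z with P(x) = P'(y). -/
open Nat.Partrec (Code)

/-- `φ i` is the partial recursive function with index `i`. -/
def φ (i : ℕ) : ℕ →. ℕ := (Denumerable.ofNat Code i).eval

/-- `LConv ψ x v`: the guessing function `ψ` on input `x` l-converges in the limit to `v`:
there is a `u` with `ψ x u = v` and for all `t > u`, `ψ x t = v` whenever it converges. -/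
def LConv (ψ : ℕ → ℕ →. ℕ) (x v : ℕ) : Prop :=
  ∃ u, v ∈ ψ x u ∧ ∀ t, u < t → ∀ w ∈ ψ x t, w = v

theorem stmt1 (a : ℕ → ℕ) (ha : Computable a)
    (hatot : ∀ n m, ((φ (a n)) m).Dom)
    (ψ : ℕ → ℕ →. ℕ) (hψ : Partrec₂ ψ) :
    ∃ ψ' : ℕ → ℕ →. ℕ, Partrec₂ ψ' ∧
      ∀ n, ∃ y, (∀ m, φ y m = Part.some (a n)) ∧
        ∀ v, LConv ψ (a n) v ↔ LConv ψ' y v := by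
  refine ⟨fun y t => (φ y 0).bind fun x => ψ x t, ?_, ?_⟩
  · have h1 : Partrec fun p : ℕ × ℕ => φ p.1 0 :=
      Nat.Partrec.Code.eval_part.comp
        ((Computable.ofNat Code).comp Computable.fst) (Computable.const 0)
    exact h1.bind (hψ.comp Computable.snd (Computable.snd.comp Computable.fst)).to₂
  · intro n
    refine ⟨Encodable.encode (Code.const (a n)), ?_, ?_⟩
    · intro m
      simp [φ, Nat.Partrec.Code.eval_const]
    · intro v
      have hy : ∀ t, ((φ (Encodable.encode (Code.const (a n))) 0).bind fun x => ψ x t) = ψ (a n) t := by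
        intro t
        simp [φ, Nat.Partrec.Code.eval_const]
      constructor
      · rintro ⟨u, h1, h2⟩
        exact ⟨u, by simp [hy, h1], fun t ht w hw => h2 t ht w (by simpa [hy] using hw)⟩
      · rintro ⟨u, h1, h2⟩
        exact ⟨u, by simpa [hy] using h1, fun t ht w hw => h2 t ht w (by simpa [hy] using hw)⟩
end

section
/- (Computing in the Limit Normal Form) There exist a primitive recursive function U and a primitive recursive predicate T'(p, x, y) such that a property P_p over constant sequences is computable in the limit with value P_p(x) if and only if P_p(x) = U(λy. T'(p, x, y)), where λy denotes the largest y for which T'(p,x,y) holds (this largest y existing because T'(p,x,·) holds at only finitely many points). -/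
/-!
At stage `s`, run the guessing function `ψ x` for `s` steps on every argument below `s` and
list the values obtained, from the largest argument down. Later stages only insert values, so
the number of blocks of equal adjacent entries grows monotonically with `s`. If `ψ x` converges
in the limit to `v`, everything above the first argument from which on all guesses are `v` is
one block of `v`s, so the count is bounded, hence eventually constant, and the list then starts
with `v`. Conversely, once the count is constant with first entry `v`, a later guess `w ≠ v`
would eventually appear above that entry and start a new block.

`T' p x y` says that `y` codes a stage at which the count grows, paired with the first entry of
the list right after it. The codes increase with the stage, so a largest one exists exactly when
`ψ x` converges in the limit, and `U` reads the limit off its second component.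
-/

open Nat.Partrec (Code)

open scoped List

section Blocks

variable {α : Type*} [DecidableEq α]

def blocks : List α → ℕ
  | [] => 0
  | a :: l => blocks l + if l.head? = some a then 0 else 1

lemma blocks_cons (a : α) (l : List α) :
    blocks (a :: l) = blocks l + if l.head? = some a then 0 else 1 := rfl

lemma blocks_cons_le (a : α) (l : List α) : blocks (a :: l) ≤ blocks l + 1 := by
  rw [blocks_cons]; split <;> omega

lemma blocks_cons_of_head?_ne {a : α} {l : List α} (h : l.head? ≠ some a) :
    blocks (a :: l) = blocks l + 1 := by
  rw [blocks_cons, if_neg h]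

lemma blocks_pos_iff {l : List α} : 0 < blocks l ↔ l ≠ [] := by
  induction l with
  | nil => simp [blocks]
  | cons a l ih =>
    simp only [blocks_cons, ne_eq, reduceCtorEq, not_false_eq_true, iff_true]
    split_ifs with h
    · exact ih.2 fun hl => by simp [hl] at h
    · omega

lemma blocks_le_length (l : List α) : blocks l ≤ l.length := by
  induction l with
  | nil => rfl
  | cons a l ih => exact (blocks_cons_le a l).trans (by simpa using ih)

lemma blocks_append_le_of_forall_eq {v : α} {l₁ : List α} (h : ∀ w ∈ l₁, w = v)
    (l₂ : List α) : blocks (l₁ ++ l₂) ≤ blocks l₂ + 1 := by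
  induction l₁ with
  | nil => simp
  | cons a l ih =>
    cases l with
    | nil => exact blocks_cons_le a l₂
    | cons b t =>
      have hab : b = a := (h b (by simp)).trans (h a (by simp)).symm
      calc blocks (a :: b :: t ++ l₂) = blocks (b :: t ++ l₂) := by simp [blocks_cons, hab]
        _ ≤ blocks l₂ + 1 := ih fun w hw => h w (List.mem_cons_of_mem a hw)

/-- Both parts are proved together: the inequality in the `cons_cons` case needs strictness. -/
lemma List.Sublist.blocks_le_and_lt {l l' : List α} (h : l <+ l') :
    blocks l ≤ blocks l' ∧ (l.head? ≠ l'.head? → blocks l < blocks l') := by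
  induction h with
  | slnil => simp
  | @cons l₁ l₂ a _ ih =>
    have hle : blocks l₂ ≤ blocks (a :: l₂) := by rw [blocks_cons]; omega
    refine ⟨ih.1.trans hle, fun hne => ?_⟩
    by_cases hh : l₁.head? = l₂.head?
    · rw [blocks_cons_of_head?_ne (hh ▸ hne)]
      exact Nat.lt_succ_of_le ih.1
    · exact (ih.2 hh).trans_le hle
  | @cons_cons l₁ l₂ a _ ih =>
    refine ⟨?_, fun hne => absurd rfl hne⟩
    rw [blocks_cons, blocks_cons]
    by_cases hh : l₁.head? = l₂.head?
    · rw [hh]; exact Nat.add_le_add_right ih.1 _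
    · have := ih.2 hh
      split <;> split <;> omega

lemma List.Sublist.blocks_le {l l' : List α} (h : l <+ l') : blocks l ≤ blocks l' :=
  h.blocks_le_and_lt.1

lemma List.Sublist.blocks_lt_of_head?_ne {l l' : List α} (h : l <+ l')
    (hne : l.head? ≠ l'.head?) : blocks l < blocks l' :=
  h.blocks_le_and_lt.2 hne

end Blocks

section ValuesBelow

variable {β : Type*} {f g : ℕ → Option β} {m n : ℕ} {b : β}

def valuesBelow (f : ℕ → Option β) (n : ℕ) : List β := (List.range n).reverse.filterMap f

@[simp]
lemma valuesBelow_zero (f : ℕ → Option β) : valuesBelow f 0 = [] := rfl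

lemma valuesBelow_succ_of_eq_some (h : f n = some b) :
    valuesBelow f (n + 1) = b :: valuesBelow f n := by
  simp [valuesBelow, List.range_succ, h]

lemma valuesBelow_succ_of_eq_none (h : f n = none) : valuesBelow f (n + 1) = valuesBelow f n := by
  simp [valuesBelow, List.range_succ, h]

lemma mem_valuesBelow : b ∈ valuesBelow f n ↔ ∃ u < n, f u = some b := by
  simp [valuesBelow]

lemma length_valuesBelow_le (f : ℕ → Option β) (n : ℕ) : (valuesBelow f n).length ≤ n :=
  (List.length_filterMap_le _ _).trans (by simp)

lemma valuesBelow_add (f : ℕ → Option β) (a k : ℕ) :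
    valuesBelow f (a + k) = valuesBelow (fun u => f (a + u)) k ++ valuesBelow f a := by
  simp [valuesBelow, List.range_add, List.filterMap_map]

lemma valuesBelow_sublist_of_le (f : ℕ → Option β) (h : m ≤ n) :
    valuesBelow f m <+ valuesBelow f n :=
  (List.range_sublist.2 h).reverse.filterMap f

lemma valuesBelow_sublist_of_extends (h : ∀ u b, f u = some b → g u = some b) (n : ℕ) :
    valuesBelow f n <+ valuesBelow g n := by
  induction n with
  | zero => simp
  | succ n ih =>
    cases hf : f n with
    | none =>
      rw [valuesBelow_succ_of_eq_none hf]
      exact ih.trans (valuesBelow_sublist_of_le g n.le_succ)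
    | some b =>
      rw [valuesBelow_succ_of_eq_some hf, valuesBelow_succ_of_eq_some (h n b hf)]
      exact ih.cons_cons b

lemma exists_valuesBelow_eq_of_head?_eq (h : (valuesBelow f n).head? = some b) :
    ∃ m < n, f m = some b ∧ valuesBelow f n = valuesBelow f (m + 1) := by
  induction n with
  | zero => simp at h
  | succ n ih =>
    cases hf : f n with
    | none =>
      rw [valuesBelow_succ_of_eq_none hf] at h ⊢
      obtain ⟨m, hm, hfm, heq⟩ := ih h
      exact ⟨m, by omega, hfm, heq⟩
    | some b' =>
      rw [valuesBelow_succ_of_eq_some hf, List.head?_cons, Option.some_inj] at h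
      exact ⟨n, n.lt_succ_self, h ▸ hf, rfl⟩

end ValuesBelow

section Jumps

variable {γ : Type*} [PartialOrder γ] {Φ : ℕ → γ}

lemma Monotone.eq_of_forall_not_lt_succ (hΦ : Monotone Φ) {a b : ℕ} (hab : a ≤ b)
    (h : ∀ t, a ≤ t → t < b → ¬ Φ t < Φ (t + 1)) : Φ b = Φ a := by
  induction b, hab using Nat.le_induction with
  | base => rfl
  | succ b hab ih =>
    rw [← ih fun t h₁ h₂ => h t h₁ (by omega)]
    exact ((hΦ b.le_succ).eq_or_lt.resolve_right (h b hab b.lt_succ_self)).symm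

lemma Monotone.exists_isGreatest_jumps (hΦ : Monotone Φ) {s : ℕ}
    (hs : ∀ t, s ≤ t → Φ t = Φ s) (h0 : Φ 0 ≠ Φ s) :
    ∃ e, IsGreatest {t | Φ t < Φ (t + 1)} e := by
  refine BddAbove.exists_isGreatest_of_nonempty ⟨s, fun t ht => ?_⟩ ?_
  · by_contra hst
    have ht : Φ t < Φ (t + 1) := ht
    rw [hs t (by omega), hs (t + 1) (by omega)] at ht
    exact ht.false
  · by_contra hnone
    exact h0 (hΦ.eq_of_forall_not_lt_succ s.zero_le fun t _ _ ht => hnone ⟨t, ht⟩).symm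

lemma Monotone.eq_of_isGreatest_jumps (hΦ : Monotone Φ) {e : ℕ}
    (he : IsGreatest {t | Φ t < Φ (t + 1)} e) {t : ℕ} (ht : e + 1 ≤ t) : Φ t = Φ (e + 1) :=
  hΦ.eq_of_forall_not_lt_succ ht fun r hr _ hjump => by have := he.2 hjump; omega

end Jumps

lemma Monotone.exists_forall_ge_eq_of_eventually_le {Φ : ℕ → ℕ} (hΦ : Monotone Φ)
    {a B : ℕ} (hB : ∀ t, a ≤ t → Φ t ≤ B) :
    ∃ s, a ≤ s ∧ ∀ t, s ≤ t → Φ t = Φ s := by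
  obtain ⟨_, ⟨S, rfl⟩, hS⟩ := BddAbove.exists_isGreatest_of_nonempty
    ⟨B, by rintro _ ⟨t, rfl⟩; exact (hΦ (le_max_left t a)).trans (hB _ (le_max_right t a))⟩
    (Set.range_nonempty Φ)
  refine ⟨max S a, le_max_right S a, fun t ht => ?_⟩
  have h₁ := hS ⟨t, rfl⟩
  have h₂ := hS ⟨max S a, rfl⟩
  have h₃ := hΦ ((le_max_left S a).trans ht)
  have h₄ := hΦ (le_max_left S a)
  omega

structure IsStageApprox (F : ℕ → ℕ → Option ℕ) (f : ℕ →. ℕ) : Prop where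
  mono {s t u w : ℕ} : s ≤ t → F s u = some w → F t u = some w
  lt_of_eq_some {s u w : ℕ} : F s u = some w → u < s
  sound {s u w : ℕ} : F s u = some w → w ∈ f u
  complete {u w : ℕ} : w ∈ f u → ∃ s, F s u = some w

def stageValues (F : ℕ → ℕ → Option ℕ) (s : ℕ) : List ℕ := valuesBelow (F s) s

abbrev jumps (F : ℕ → ℕ → Option ℕ) : Set ℕ :=
  {t | blocks (stageValues F t) < blocks (stageValues F (t + 1))}

def limitGuess (F : ℕ → ℕ → Option ℕ) (s : ℕ) : ℕ :=
  (stageValues F (s + 1)).head?.getD 0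

namespace IsStageApprox

variable {F : ℕ → ℕ → Option ℕ} {f : ℕ →. ℕ} {ψ : ℕ → ℕ →. ℕ} {x v : ℕ}

lemma stageValues_sublist (hF : IsStageApprox F f) {s t : ℕ} (h : s ≤ t) :
    stageValues F s <+ stageValues F t :=
  (valuesBelow_sublist_of_le (F s) h).trans
    (valuesBelow_sublist_of_extends (fun _ _ => hF.mono h) t)

lemma monotone_blocks (hF : IsStageApprox F f) :
    Monotone fun s => blocks (stageValues F s) :=
  fun _ _ h => (hF.stageValues_sublist h).blocks_le

lemma head?_eq_of_blocks_eq (hF : IsStageApprox F f) {s t : ℕ} (h : s ≤ t)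
    (hb : blocks (stageValues F s) = blocks (stageValues F t)) :
    (stageValues F s).head? = (stageValues F t).head? := by
  by_contra hne
  exact (hb ▸ (hF.stageValues_sublist h).blocks_lt_of_head?_ne hne).false

/-- The values from index `u₀` on form a single block of `v`s, and there are at most `u₀` values
below it. -/
lemma head?_eq_and_blocks_le (hF : IsStageApprox F (ψ x)) {u₀ s₀ s : ℕ}
    (hv : v ∈ ψ x u₀) (hlim : ∀ t, u₀ < t → ∀ w ∈ ψ x t, w = v)
    (hs₀ : F s₀ u₀ = some v) (hs : s₀ ≤ s) :
    (stageValues F s).head? = some v ∧ blocks (stageValues F s) ≤ u₀ + 1 := by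
  have hu₀ : u₀ < s := (hF.lt_of_eq_some hs₀).trans_le hs
  set top := valuesBelow (fun u => F s (u₀ + u)) (s - u₀)
  have hsplit : stageValues F s = top ++ valuesBelow (F s) u₀ := by
    rw [stageValues, ← valuesBelow_add]; congr 1; omega
  have htop : ∀ w ∈ top, w = v := by
    intro w hw
    obtain ⟨u, -, hu⟩ := mem_valuesBelow.1 hw
    rcases u.eq_zero_or_pos with rfl | hpos
    · exact Part.mem_unique (hF.sound hu) hv
    · exact hlim _ (by omega) w (hF.sound hu)
  have hne : top ≠ [] :=
    List.ne_nil_of_mem (mem_valuesBelow.2 ⟨0, by omega, hF.mono hs hs₀⟩)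
  obtain ⟨a, l, hal⟩ := List.exists_cons_of_ne_nil hne
  refine ⟨by rw [hsplit, hal, List.cons_append, List.head?_cons, htop a (by simp [hal])], ?_⟩
  rw [hsplit]
  exact (blocks_append_le_of_forall_eq htop _).trans
    (Nat.add_le_add_right ((blocks_le_length _).trans (length_valuesBelow_le _ _)) 1)

lemma exists_stable_of_lconv (hF : IsStageApprox F (ψ x)) (h : LConv ψ x v) :
    ∃ s, (∀ t, s ≤ t → blocks (stageValues F t) = blocks (stageValues F s)) ∧
      (stageValues F s).head? = some v := by
  obtain ⟨u₀, hv, hlim⟩ := h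
  obtain ⟨s₀, hs₀⟩ := hF.complete hv
  obtain ⟨s, hs, hstable⟩ := hF.monotone_blocks.exists_forall_ge_eq_of_eventually_le
    fun t ht => (hF.head?_eq_and_blocks_le hv hlim hs₀ ht).2
  exact ⟨s, hstable, (hF.head?_eq_and_blocks_le hv hlim hs₀ hs).1⟩

/-- A later guess `w ≠ v` would be listed above the block of `v`s, creating a new block. -/
lemma lconv_of_stable (hF : IsStageApprox F (ψ x)) {s : ℕ}
    (hstable : ∀ t, s ≤ t → blocks (stageValues F t) = blocks (stageValues F s))
    (hhead : (stageValues F s).head? = some v) : LConv ψ x v := by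
  obtain ⟨m, -, hm, hsm⟩ := exists_valuesBelow_eq_of_head?_eq hhead
  refine ⟨m, hF.sound hm, fun t hmt w hw => ?_⟩
  by_contra hwv
  obtain ⟨r, hr⟩ := hF.complete hw
  have htr : t < max r s := (hF.lt_of_eq_some hr).trans_le (le_max_left r s)
  have hsr : s ≤ max r s := le_max_right r s
  have hsub : w :: stageValues F s <+ stageValues F (max r s) := by
    rw [stageValues, hsm]
    refine ((valuesBelow_sublist_of_extends (fun _ _ => hF.mono hsr) _).trans
      (valuesBelow_sublist_of_le _ hmt)).cons_cons w |>.trans ?_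
    rw [← valuesBelow_succ_of_eq_some (hF.mono (le_max_left r s) hr)]
    exact valuesBelow_sublist_of_le _ htr
  have hlt : blocks (stageValues F s) < blocks (stageValues F (max r s)) := by
    have := hsub.blocks_le
    have hne : (stageValues F s).head? ≠ some w := by
      rw [hhead]; exact fun h => hwv (Option.some_inj.1 h).symm
    rwa [blocks_cons_of_head?_ne hne] at this
  exact (hstable _ hsr ▸ hlt).false

lemma lconv_iff_exists_isGreatest_jumps (hF : IsStageApprox F (ψ x)) :
    LConv ψ x v ↔ ∃ e, IsGreatest (jumps F) e ∧ limitGuess F e = v := by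
  constructor
  · intro h
    obtain ⟨s, hstable, hhead⟩ := hF.exists_stable_of_lconv h
    have h0 : blocks (stageValues F 0) ≠ blocks (stageValues F s) :=
      (blocks_pos_iff.2 fun hnil => by simp [hnil] at hhead).ne
    obtain ⟨e, he⟩ := hF.monotone_blocks.exists_isGreatest_jumps hstable h0
    have hlast := hF.head?_eq_of_blocks_eq (le_max_left (e + 1) s)
      (hF.monotone_blocks.eq_of_isGreatest_jumps he (le_max_left (e + 1) s)).symm
    have hfirst := hF.head?_eq_of_blocks_eq (le_max_right (e + 1) s)
      (hstable _ (le_max_right _ _)).symm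
    refine ⟨e, he, ?_⟩
    rw [limitGuess, hlast, ← hfirst, hhead, Option.getD_some]
  · rintro ⟨e, he, rfl⟩
    have hne : stageValues F (e + 1) ≠ [] := blocks_pos_iff.1 (Nat.zero_lt_of_lt he.1)
    obtain ⟨a, l, hal⟩ := List.exists_cons_of_ne_nil hne
    refine hF.lconv_of_stable (s := e + 1)
      (fun t ht => hF.monotone_blocks.eq_of_isGreatest_jumps he ht) ?_
    simp [limitGuess, hal]

end IsStageApprox

/-- `stamp h (s + 1)` exceeds `stampCode h s`, which makes `stampCode h` increasing. -/
def stamp (h : ℕ → ℕ) : ℕ → ℕ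
  | 0 => 0
  | s + 1 => Nat.pair (stamp h s) (h s) + 1

def stampCode (h : ℕ → ℕ) (s : ℕ) : ℕ := Nat.pair (stamp h s) (h s)

lemma stampCode_strictMono (h : ℕ → ℕ) : StrictMono (stampCode h) :=
  strictMono_nat_of_lt_succ fun _ => (Nat.lt_succ_self _).trans_le (Nat.left_le_pair _ _)

@[simp]
lemma unpair_stampCode_snd (h : ℕ → ℕ) (s : ℕ) : (stampCode h s).unpair.2 = h s := by
  simp [stampCode]

def evalnApprox (c : Code) (x s u : ℕ) : Option ℕ := c.evaln s (Nat.pair x u)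

lemma isStageApprox_evalnApprox {c : Code} {ψ : ℕ → ℕ →. ℕ}
    (hc : c.eval = fun n => ψ n.unpair.1 n.unpair.2) (x : ℕ) :
    IsStageApprox (evalnApprox c x) (ψ x) where
  mono h hw := Code.evaln_mono h hw
  lt_of_eq_some hw := (Nat.right_le_pair x _).trans_lt (Code.evaln_bound hw)
  sound hw := by simpa [hc] using Code.evaln_sound hw
  complete hw := Code.evaln_complete.1 (by simpa [hc] using hw)

/-- The bound `s < y + 1` loses no jump stage, since `s ≤ stampCode _ s`. -/
def limitT (F : ℕ → ℕ → Option ℕ) (y : ℕ) : Bool :=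
  decide (∃ s < y + 1, s ∈ jumps F ∧ y = stampCode (limitGuess F) s)

lemma limitT_eq_true_iff {F : ℕ → ℕ → Option ℕ} {y : ℕ} :
    limitT F y = true ↔ y ∈ stampCode (limitGuess F) '' jumps F := by
  rw [limitT, decide_eq_true_iff]
  constructor
  · rintro ⟨s, -, hs, rfl⟩
    exact ⟨s, hs, rfl⟩
  · rintro ⟨s, hs, rfl⟩
    exact ⟨s, Nat.lt_succ_of_le ((stampCode_strictMono _).id_le s), hs, rfl⟩

section Primrec

open Primrec

variable {α β : Type*} [Primcodable α] [Primcodable β]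

lemma primrec_blocks [DecidableEq β] : Primrec (blocks : List β → ℕ) := by
  have hstep : Primrec₂ fun (_ : List β) (q : β × List β × ℕ) =>
      q.2.2 + if q.2.1.head? = some q.1 then 0 else 1 :=
    (nat_add.comp (snd.comp (snd.comp snd)) (Primrec.ite
      (Primrec.eq.comp (list_head?.comp (fst.comp (snd.comp snd)))
        (option_some.comp (fst.comp snd)))
      (const 0) (const 1))).to₂
  refine (list_rec Primrec.id (const 0) hstep).of_eq fun l => ?_
  induction l with
  | nil => rfl
  | cons a l ih => rw [blocks_cons, ← ih]; rfl

lemma primrec_valuesBelow {f : α → ℕ → Option β} {n : α → ℕ} (hf : Primrec₂ f)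
    (hn : Primrec n) : Primrec fun a => valuesBelow (f a) (n a) :=
  listFilterMap (list_reverse.comp (list_range.comp hn)) hf

lemma primrec_stampCode {h : α → ℕ → ℕ} (hh : Primrec₂ h) :
    Primrec fun q : α × ℕ => stampCode (h q.1) q.2 := by
  have hstep : Primrec₂ fun (q : α × ℕ) (p : ℕ × ℕ) => Nat.pair p.2 (h q.1 p.1) + 1 :=
    (succ.comp (Primrec₂.natPair.comp (snd.comp snd)
      (hh.comp (fst.comp fst) (fst.comp snd)))).to₂
  have hstamp : Primrec fun q : α × ℕ => stamp (h q.1) q.2 :=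
    (nat_rec' snd (const 0) hstep).of_eq fun q => by
      induction q.2 with
      | zero => rfl
      | succ n ih => simp only [stamp, ← ih]
  exact Primrec₂.natPair.comp hstamp hh

lemma primrec_evalnApprox :
    Primrec fun q : (Code × ℕ) × ℕ × ℕ => evalnApprox q.1.1 q.1.2 q.2.1 q.2.2 :=
  Code.primrec_evaln.comp (pair (pair (fst.comp snd) (fst.comp fst))
    (Primrec₂.natPair.comp (snd.comp fst) (snd.comp snd)))

variable {F : α → ℕ → ℕ → Option ℕ}

lemma primrec_stageValues (hF : Primrec fun q : α × ℕ × ℕ => F q.1 q.2.1 q.2.2) :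
    Primrec fun q : α × ℕ => stageValues (F q.1) q.2 :=
  primrec_valuesBelow (hF.comp (pair (fst.comp fst) (pair (snd.comp fst) snd))) snd

lemma primrec_limitGuess (hF : Primrec fun q : α × ℕ × ℕ => F q.1 q.2.1 q.2.2) :
    Primrec fun q : α × ℕ => limitGuess (F q.1) q.2 :=
  option_getD.comp (list_head?.comp ((primrec_stageValues hF).comp (pair fst (succ.comp snd))))
    (const 0)

lemma primrecPred_mem_jumps (hF : Primrec fun q : α × ℕ × ℕ => F q.1 q.2.1 q.2.2) :
    PrimrecPred fun q : α × ℕ => q.2 ∈ jumps (F q.1) :=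
  nat_lt.comp (primrec_blocks.comp (primrec_stageValues hF))
    (primrec_blocks.comp ((primrec_stageValues hF).comp (pair fst (succ.comp snd))))

lemma primrec_limitT (hF : Primrec fun q : α × ℕ × ℕ => F q.1 q.2.1 q.2.2) :
    Primrec fun q : α × ℕ => limitT (F q.1) q.2 := by
  have hR : PrimrecRel fun (s : ℕ) (q : α × ℕ) =>
      s ∈ jumps (F q.1) ∧ q.2 = stampCode (limitGuess (F q.1)) s :=
    ((primrecPred_mem_jumps hF).comp (pair (fst.comp snd) fst)).and
      (Primrec.eq.comp (snd.comp snd)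
        ((primrec_stampCode (h := fun a => limitGuess (F a)) (primrec_limitGuess hF)).comp
          (pair (fst.comp snd) fst)))
  refine ((hR.exists_mem_list.comp (list_range.comp (succ.comp snd)) Primrec.id).of_eq
    fun q => ?_).decide
  simp only [List.mem_range, id]

end Primrec

open Primrec in
lemma primrec_limitT_evalnApprox_ofNat : Primrec fun a : ℕ × ℕ × ℕ =>
    limitT (evalnApprox (Denumerable.ofNat Code a.1) a.2.1) a.2.2 := by
  have hF := primrec_evalnApprox.comp
    (pair (pair ((Primrec.ofNat Code).comp (fst.comp fst)) (snd.comp fst)) snd)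
  exact (primrec_limitT (F := fun q : ℕ × ℕ => evalnApprox (Denumerable.ofNat Code q.1) q.2)
    hF).comp (pair (pair fst (fst.comp snd)) (snd.comp snd))

/-- Computing in the Limit Normal Form. -/
theorem stmt2 : ∃ U : ℕ → ℕ, Primrec U ∧ ∃ T' : ℕ → ℕ → ℕ → Bool,
    Primrec (fun a : ℕ × ℕ × ℕ => T' a.1 a.2.1 a.2.2) ∧
    ∀ ψ : ℕ → ℕ →. ℕ, Partrec₂ ψ → ∃ p : ℕ, ∀ x v : ℕ,
      LConv ψ x v ↔
        ({y | T' p x y = true}.Finite ∧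
          ∃ y, T' p x y = true ∧ (∀ z, T' p x z = true → z ≤ y) ∧ U y = v) := by
  refine ⟨fun y => y.unpair.2, Primrec.snd.comp Primrec.unpair,
    fun p x => limitT (evalnApprox (Denumerable.ofNat Code p) x),
    primrec_limitT_evalnApprox_ofNat, fun ψ hψ => ?_⟩
  obtain ⟨c, hc⟩ := Code.exists_code.1 <| Partrec.nat_iff.1 <|
    hψ.comp (Computable.fst.comp Computable.unpair) (Computable.snd.comp Computable.unpair)
  refine ⟨Encodable.encode c, fun x v => ?_⟩
  have hmono := stampCode_strictMono (limitGuess (evalnApprox c x))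
  simp only [Denumerable.ofNat_encode, limitT_eq_true_iff, Set.ofPred_mem_eq]
  rw [(isStageApprox_evalnApprox hc x).lconv_iff_exists_isGreatest_jumps]
  constructor
  · rintro ⟨e, he, rfl⟩
    have hy := hmono.map_isGreatest.2 he
    exact ⟨Set.finite_iff_bddAbove.2 hy.bddAbove, _, hy.1, fun _ hz => hy.2 hz,
      unpair_stampCode_snd _ _⟩
  · rintro ⟨-, _, ⟨e, he, rfl⟩, hub, rfl⟩
    exact ⟨e, hmono.map_isGreatest.1 ⟨⟨e, he, rfl⟩, fun _ hz => hub _ hz⟩,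
      (unpair_stampCode_snd _ _).symm⟩
end

section
/- There is an l-total property Q, computable in the limit, that enumerates without repetition the indices of partial recursive functions that are not total: for every n there is a unique x such that Q(n) = x, φ_x is not total, and every non-total partial recursive function has some index appearing as a value Q(n). -/
/-!
Every non-total `φ j` diverges at some `k` and therefore coincides with its puncture at `k`
(the function that diverges at `k` and agrees with `φ j` elsewhere), while every puncture is
non-total. The s-m-n theorem, whose `curry` is injective, assigns computably and injectively an
index to the puncture of `φ j` at `k`, uniformly in `(j, k)`; a total computable enumeration is in
particular computable in the limit, with constant guesses.
-/

open Nat.Partrec (Code)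

theorem LConv.of_forall_eq_some {ψ : ℕ → ℕ →. ℕ} {x v : ℕ} (h : ∀ t, ψ x t = Part.some v) :
    LConv ψ x v :=
  ⟨0, h 0 ▸ Part.mem_some v, fun t _ _ hw => Part.mem_some_iff.1 (h t ▸ hw)⟩

theorem φ_encode (c : Code) : φ (Encodable.encode c) = c.eval := by
  simp [φ]

theorem exists_computable_injective_index {α : Type*} [Primcodable α] {f : α → ℕ →. ℕ}
    (hf : Partrec₂ f) :
    ∃ Q : α → ℕ, Computable Q ∧ Function.Injective Q ∧ ∀ a, φ (Q a) = f a := by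
  have hdec : Partrec fun m : ℕ =>
      (Part.ofOption (Encodable.decode (α := α) m.unpair.1)).bind fun a => f a m.unpair.2 :=
    ((Computable.ofOption (Computable.decode.comp (Computable.fst.comp Computable.unpair))).bind
      (hf.comp Computable.snd (Computable.snd.comp (Computable.unpair.comp Computable.fst))))
  obtain ⟨c, hc⟩ := Nat.Partrec.Code.exists_code.1 (Partrec.nat_iff.1 hdec)
  refine ⟨fun a => Encodable.encode (c.curry (Encodable.encode a)), ?_, ?_, ?_⟩
  · exact (Primrec.encode.comp (Nat.Partrec.Code.primrec₂_curry.comp (Primrec.const c)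
      Primrec.encode)).to_comp
  · exact fun a b hab =>
      Encodable.encode_injective (Nat.Partrec.Code.curry_inj (Encodable.encode_injective hab)).2
  · intro a
    funext x
    simp [φ_encode, Nat.Partrec.Code.eval_curry, hc]

def puncture (f : ℕ →. ℕ) (k : ℕ) : ℕ →. ℕ := fun x => if x = k then Part.none else f x

theorem not_total_puncture (f : ℕ →. ℕ) (k : ℕ) : ¬ ∀ x, (puncture f k x).Dom := fun h => by
  simpa [puncture] using h k

theorem puncture_of_not_dom {f : ℕ →. ℕ} {k : ℕ} (hk : ¬ (f k).Dom) : puncture f k = f := by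
  funext x
  by_cases hx : x = k
  · subst hx
    simp [puncture, Part.eq_none_iff'.2 hk]
  · simp [puncture, hx]

theorem partrec₂_puncture_φ : Partrec₂ fun p : ℕ × ℕ => puncture (φ p.1) p.2 := by
  have hφ : Partrec₂ φ := Nat.Partrec.Code.eval_part.comp
    ((Computable.ofNat Code).comp Computable.fst) Computable.snd
  have heq : Computable fun q : (ℕ × ℕ) × ℕ => decide (q.2 = q.1.2) :=
    (Primrec.eq.comp Primrec.snd (Primrec.snd.comp Primrec.fst)).decide.to_comp
  refine (Partrec.cond heq Partrec.none (hφ.comp (Computable.fst.comp Computable.fst)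
    Computable.snd)).of_eq fun q => ?_
  by_cases h : q.2 = q.1.2 <;> simp [puncture, h]

theorem stmt6 : ∃ (Q : ℕ → ℕ) (ψ : ℕ → ℕ →. ℕ), Partrec₂ ψ ∧
    (∀ n, LConv ψ n (Q n)) ∧
    Function.Injective Q ∧
    (∀ n, ¬ ∀ m, ((φ (Q n)) m).Dom) ∧
    (∀ j, (¬ ∀ m, ((φ j) m).Dom) → ∃ n, ∀ m, φ (Q n) m = φ j m) := by
  obtain ⟨R, hRc, hRinj, hφR⟩ := exists_computable_injective_index partrec₂_puncture_φ
  have hQc : Computable fun n : ℕ => R n.unpair := hRc.comp Computable.unpair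
  refine ⟨fun n => R n.unpair, fun n _ => Part.some (R n.unpair), (hQc.comp Computable.fst).partrec,
    fun n => LConv.of_forall_eq_some fun _ => rfl, hRinj.comp Nat.pairEquiv.symm.injective,
    fun n => hφR _ ▸ not_total_puncture _ _, fun j hj => ?_⟩
  obtain ⟨k, hk⟩ := not_forall.1 hj
  exact ⟨Nat.pair j k, by simp only [Nat.unpair_pair, hφR, puncture_of_not_dom hk, implies_true]⟩
end

section
/- For any two total recursive functions g and h, the equality property P_eq is computable in the limit, where P_eq(⟨i,j⟩) = 1 if φ_i is g-easy, φ_j is h-easy, and φ_i = φ_j; P_eq(⟨i,j⟩) = 0 if φ_i is g-easy, φ_j is h-easy, and φ_i ≠ φ_j; and P_eq(⟨i,j⟩) l-diverges if φ_i is not g-easy or φ_j is not h-easy. -/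
open Nat.Partrec (Code)

/-- φ_i is h-easy: its running time is bounded by h on all but finitely many inputs. -/
def Easy (h : ℕ → ℕ) (i : ℕ) : Prop :=
  ∃ N, ∀ x, N ≤ x → (Nat.Partrec.Code.evaln (h x) (Denumerable.ofNat Code i) x).isSome

/-!
At stage `t` the guess is `t + 2` if one of the two programs overruns its time bound at input `t`;
otherwise it is `1` or `0` according as the two programs agree on every input `x < t` when run
for `max t (max (g x) (h x))` steps. Overruns at infinitely many stages make the guesses
unbounded. Otherwise both programs meet their bounds on all inputs `x ≥ N`, so there the `g x`-
and `h x`-step approximations are already exact, while the finitely many inputs below `N` become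
exact once `t` is large; hence the stage-`t` comparison eventually decides whether `φ i = φ j`.
-/

open Filter Denumerable

theorem Part.ofOption_injective {α : Type*} :
    Function.Injective (Part.ofOption : Option α → Part α) := by
  intro o o' h
  ext a
  rw [← Option.mem_def, ← Option.mem_def, ← Part.mem_ofOption, ← Part.mem_ofOption, h]

namespace Nat.Partrec.Code

theorem ofOption_evaln_of_isSome {c : Code} {k s x : ℕ} (hk : (evaln k c x).isSome)
    (hks : k ≤ s) : Part.ofOption (evaln s c x) = eval c x := by
  obtain ⟨v, hv⟩ := Option.isSome_iff_exists.mp hk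
  have hvs : evaln s c x = some v := evaln_mono hks hv
  rw [hvs, Part.eq_some_iff.mpr (evaln_sound hvs)]
  rfl

theorem eventually_ofOption_evaln (c : Code) (x : ℕ) :
    ∀ᶠ s in atTop, Part.ofOption (evaln s c x) = eval c x := by
  by_cases hd : (eval c x).Dom
  · obtain ⟨k, hk⟩ := evaln_complete.mp (Part.get_mem hd)
    filter_upwards [eventually_ge_atTop k] with s hs
    exact ofOption_evaln_of_isSome (Option.isSome_iff_exists.mpr ⟨_, hk⟩) hs
  · refine Eventually.of_forall fun s => ?_
    have hnone : evaln s c x = Option.none := Option.eq_none_iff_forall_ne_some.mpr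
      fun v hv => hd (Part.dom_iff_mem.mpr ⟨v, evaln_sound hv⟩)
    rw [hnone, Part.eq_none_iff'.mpr hd]
    rfl

theorem evaln_eq_evaln_iff {c d : Code} {s s' x : ℕ}
    (hc : Part.ofOption (evaln s c x) = eval c x) (hd : Part.ofOption (evaln s' d x) = eval d x) :
    evaln s c x = evaln s' d x ↔ eval c x = eval d x := by
  rw [← hc, ← hd, Part.ofOption_injective.eq_iff]

end Nat.Partrec.Code

theorem lConv_some_iff {f : ℕ → ℕ → ℕ} {p v : ℕ} :
    LConv (fun p t => Part.some (f p t)) p v ↔ ∀ᶠ t in atTop, f p t = v := by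
  simp only [LConv, Part.mem_some_iff, eventually_atTop]
  constructor
  · rintro ⟨u, hu, hlater⟩
    refine ⟨u, fun t ht => ?_⟩
    rcases ht.eq_or_lt with rfl | ht
    · exact hu.symm
    · exact hlater t ht _ rfl
  · rintro ⟨u, hu⟩
    exact ⟨u, (hu u le_rfl).symm, fun t ht w hw => hw.trans (hu t ht.le)⟩

theorem Computable.decide_forall_lt {α : Type*} [Primcodable α] {f : α → ℕ}
    {p : α → ℕ → Bool} (hf : Computable f) (hp : Computable₂ p) :
    Computable fun a => decide (∀ x < f a, p a x = true) := by
  have hrec : Computable fun a =>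
      Nat.rec (motive := fun _ => Bool) true (fun n b => b && p a n) (f a) :=
    nat_rec hf (const true)
      ((Primrec.and.to_comp.comp (snd.comp snd) (hp.comp fst (fst.comp snd))).to₂)
  refine hrec.of_eq fun a => ?_
  induction f a with
  | zero => simp
  | succ n ih => simp only [Nat.forall_lt_succ_right, Bool.decide_and, Bool.decide_eq_true, ← ih]

section GuessInTheLimit

variable (g h : ℕ → ℕ)

def stepBound (t x : ℕ) : ℕ := max t (max (g x) (h x))

def boundsMet (i j t : ℕ) : Bool :=
  (Code.evaln (g t) (ofNat Code i) t).isSome && (Code.evaln (h t) (ofNat Code j) t).isSome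

def agreeBelow (i j t : ℕ) : Bool :=
  decide (∀ x < t, Code.evaln (stepBound g h t x) (ofNat Code i) x =
    Code.evaln (stepBound g h t x) (ofNat Code j) x)

def guess (i j t : ℕ) : ℕ :=
  bif boundsMet g h i j t then (bif agreeBelow g h i j t then 1 else 0) else t + 2

variable {g h}

theorem easy_iff_eventually {i : ℕ} :
    Easy g i ↔ ∀ᶠ x in atTop, (Code.evaln (g x) (ofNat Code i) x).isSome :=
  eventually_atTop.symm

theorem eventually_boundsMet_iff {i j : ℕ} :
    (∀ᶠ t in atTop, boundsMet g h i j t = true) ↔ Easy g i ∧ Easy h j := by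
  simp only [boundsMet, Bool.and_eq_true, eventually_and, easy_iff_eventually]

theorem ofOption_evaln_stepBound_left {i x : ℕ} (hx : (Code.evaln (g x) (ofNat Code i) x).isSome)
    (t : ℕ) : Part.ofOption (Code.evaln (stepBound g h t x) (ofNat Code i) x) = φ i x :=
  Code.ofOption_evaln_of_isSome hx ((le_max_left _ _).trans (le_max_right _ _))

theorem ofOption_evaln_stepBound_right {j x : ℕ} (hx : (Code.evaln (h x) (ofNat Code j) x).isSome)
    (t : ℕ) : Part.ofOption (Code.evaln (stepBound g h t x) (ofNat Code j) x) = φ j x :=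
  Code.ofOption_evaln_of_isSome hx ((le_max_right _ _).trans (le_max_right _ _))

theorem eventually_ofOption_evaln_stepBound (i x : ℕ) :
    ∀ᶠ t in atTop, Part.ofOption (Code.evaln (stepBound g h t x) (ofNat Code i) x) = φ i x :=
  (tendsto_atTop_mono (fun _ => le_max_left _ _) tendsto_id).eventually
    (Code.eventually_ofOption_evaln _ x)

theorem eventually_agreeBelow {i j : ℕ} (hi : Easy g i) (hj : Easy h j)
    (heq : ∀ x, φ i x = φ j x) : ∀ᶠ t in atTop, agreeBelow g h i j t = true := by
  obtain ⟨N, hN⟩ := eventually_atTop.mp (eventually_boundsMet_iff.mpr ⟨hi, hj⟩)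
  have hsmall : ∀ᶠ t in atTop, ∀ x ∈ Finset.range N,
      Code.evaln (stepBound g h t x) (ofNat Code i) x =
        Code.evaln (stepBound g h t x) (ofNat Code j) x := by
    refine (eventually_all_finset _).mpr fun x _ => ?_
    filter_upwards [eventually_ofOption_evaln_stepBound i x,
      eventually_ofOption_evaln_stepBound j x] with t hit hjt
    exact (Code.evaln_eq_evaln_iff hit hjt).mpr (heq x)
  filter_upwards [hsmall] with t ht
  refine decide_eq_true fun x _ => ?_
  by_cases hxN : x < N
  · exact ht x (Finset.mem_range.mpr hxN)
  · obtain ⟨hix, hjx⟩ := Bool.and_eq_true_iff.mp (hN x (not_lt.mp hxN))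
    exact (Code.evaln_eq_evaln_iff (ofOption_evaln_stepBound_left hix t)
      (ofOption_evaln_stepBound_right hjx t)).mpr (heq x)

theorem eventually_not_agreeBelow {i j x : ℕ} (hx : φ i x ≠ φ j x) :
    ∀ᶠ t in atTop, agreeBelow g h i j t = false := by
  filter_upwards [eventually_gt_atTop x, eventually_ofOption_evaln_stepBound i x,
    eventually_ofOption_evaln_stepBound j x] with t hxt hit hjt
  exact decide_eq_false fun hall => hx ((Code.evaln_eq_evaln_iff hit hjt).mp (hall x hxt))

theorem eventually_guess_eq_one {i j : ℕ} (hi : Easy g i) (hj : Easy h j)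
    (heq : ∀ x, φ i x = φ j x) : ∀ᶠ t in atTop, guess g h i j t = 1 := by
  filter_upwards [eventually_boundsMet_iff.mpr ⟨hi, hj⟩, eventually_agreeBelow hi hj heq]
    with t hb ha
  simp only [guess, hb, ha, cond_true]

theorem eventually_guess_eq_zero {i j x : ℕ} (hi : Easy g i) (hj : Easy h j)
    (hx : φ i x ≠ φ j x) : ∀ᶠ t in atTop, guess g h i j t = 0 := by
  filter_upwards [eventually_boundsMet_iff.mpr ⟨hi, hj⟩,
    eventually_not_agreeBelow (g := g) (h := h) hx] with t hb ha
  simp only [guess, hb, ha, cond_true, cond_false]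

theorem not_eventually_guess_eq {i j : ℕ} (hne : ¬Easy g i ∨ ¬Easy h j) (v : ℕ) :
    ¬∀ᶠ t in atTop, guess g h i j t = v := by
  intro hv
  have hfail : ∃ᶠ t in atTop, boundsMet g h i j t = false := by
    simpa only [Bool.not_eq_true] using
      not_eventually.mp (mt eventually_boundsMet_iff.mp (not_and_or.mpr hne))
  obtain ⟨t, hbad, hvt, hlarge⟩ :=
    (hfail.and_eventually (hv.and (eventually_gt_atTop v))).exists
  simp only [guess, hbad, cond_false] at hvt
  omega

open Computable in
theorem computable₂_guess (hg : Computable g) (hh : Computable h) :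
    Computable₂ fun p t : ℕ => guess g h p.unpair.1 p.unpair.2 t := by
  have hcode : Computable (ofNat Code) := (Primrec.ofNat Code).to_comp
  have hevaln : Computable fun a : (ℕ × Code) × ℕ => Code.evaln a.1.1 a.1.2 a.2 :=
    Code.primrec_evaln.to_comp
  have hi : Computable fun a : ℕ × ℕ => ofNat Code a.1.unpair.1 :=
    hcode.comp (fst.comp (Primrec.unpair.to_comp.comp fst))
  have hj : Computable fun a : ℕ × ℕ => ofNat Code a.1.unpair.2 :=
    hcode.comp (snd.comp (Primrec.unpair.to_comp.comp fst))
  have hmax : Computable₂ (max : ℕ → ℕ → ℕ) := Primrec.nat_max.to_comp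
  have hbound : Computable₂ fun (a : ℕ × ℕ) x => stepBound g h a.2 x :=
    hmax.comp (snd.comp fst) (hmax.comp (hg.comp snd) (hh.comp snd))
  have hbounds : Computable fun a : ℕ × ℕ => boundsMet g h a.1.unpair.1 a.1.unpair.2 a.2 :=
    Primrec.and.to_comp.comp
      (Primrec.option_isSome.to_comp.comp (hevaln.comp (((hg.comp snd).pair hi).pair snd)))
      (Primrec.option_isSome.to_comp.comp (hevaln.comp (((hh.comp snd).pair hj).pair snd)))
  have hagree : Computable fun a : ℕ × ℕ => agreeBelow g h a.1.unpair.1 a.1.unpair.2 a.2 :=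
    (Computable.decide_forall_lt snd (Primrec.eq.decide.to_comp.comp
      (hevaln.comp ((hbound.pair (hi.comp fst)).pair snd))
      (hevaln.comp ((hbound.pair (hj.comp fst)).pair snd))).to₂).of_eq
      fun _ => by simp only [agreeBelow, decide_eq_true_eq]
  exact hbounds.cond (hagree.cond (const 1) (const 0)) (succ.comp (succ.comp snd))

end GuessInTheLimit

theorem stmt7 (g h : ℕ → ℕ) (hg : Computable g) (hh : Computable h) :
    ∃ ψ : ℕ → ℕ →. ℕ, Partrec₂ ψ ∧ ∀ i j : ℕ,
      (Easy g i → Easy h j → (∀ x, φ i x = φ j x) → LConv ψ (Nat.pair i j) 1) ∧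
      (Easy g i → Easy h j → (∃ x, φ i x ≠ φ j x) → LConv ψ (Nat.pair i j) 0) ∧
      ((¬ Easy g i ∨ ¬ Easy h j) → ¬ ∃ v, LConv ψ (Nat.pair i j) v) := by
  refine ⟨fun p t => Part.some (guess g h p.unpair.1 p.unpair.2 t),
    (computable₂_guess hg hh).partrec₂, fun i j => ?_⟩
  simp only [lConv_some_iff, Nat.unpair_pair]
  exact ⟨eventually_guess_eq_one, fun hi hj ⟨x, hx⟩ => eventually_guess_eq_zero hi hj hx,
    fun hne ⟨v, hv⟩ => not_eventually_guess_eq hne v hv⟩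
end

section
/- If a class of total recursive functions is computable in the limit by a property P (i.e., for each x, if P(x) = y then φ_y is total), then there is an l-total property P', computable in the limit, giving a canonical enumeration: for any x and y, if P'(x) = i and P'(y) = j with x ≠ y, then φ_i(z) ≠ φ_j(z) for some z, and P' lists an index of each function in the class exactly once. -/
open Nat.Partrec (Code)

/-!
At stage `s` the guess for `x` is the value `ψ(x, u)` for the latest `u` whose computation halts
within `s` steps; a mind change is a stage at which this guess changes or a late-halting
computation disagrees with it. If `ψ` converges on `x`, the mind changes stop, so the last one
settles at some `σ(x)`; otherwise either there is never a guess or the mind changes go on forever.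

The enumeration is indexed by pairs `⟪x, σ⟫`. At stage `s` the index follows the guess for `x` if
`σ` is its last mind change and no `x'` of higher priority `(last mind change, x')` has a guess not
yet seen to differ from it; otherwise it names the partial function `{0 ↦ ⟪x, σ⟫}`. In the limit
`⟪x, σ⟫` names the limit of `x` exactly when `σ = σ(x)` and `(σ(x), x)` is minimal among the
inputs whose limits compute the same function: an `x'` without a limit stops blocking because its
priority runs off, and since the functions of the class are total, two different ones are seen to
differ at a finite stage.
-/

theorem LConv.unique {ψ : ℕ → ℕ →. ℕ} {x y y' : ℕ} (h : LConv ψ x y) (h' : LConv ψ x y') :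
    y = y' := by
  obtain ⟨u, hu, hafter⟩ := h
  obtain ⟨u', hu', hafter'⟩ := h'
  rcases lt_trichotomy u u' with hlt | rfl | hgt
  · exact (hafter u' hlt y' hu').symm
  · exact Part.mem_unique hu hu'
  · exact hafter' u hgt y hu

namespace CanonicalEnumeration

open Nat.Partrec.Code Encodable Denumerable Filter

theorem lconv_some_of_eventually_eq {f : ℕ → ℕ → ℕ} {n v : ℕ} (h : ∀ᶠ s in atTop, f n s = v) :
    LConv (fun n s => Part.some (f n s)) n v := by
  obtain ⟨S, hS⟩ := eventually_atTop.1 h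
  exact ⟨S, by simp [hS S le_rfl], fun t ht w hw => by simpa [hS t ht.le] using hw⟩

/-- The indices that name no function of the class are sent to these codes of pairwise distinct
partial functions, which therefore also differ from every total function. -/
def junkCode (n : ℕ) : Code := .comp (.const n) (.rfind' .id)

theorem pair_eq_zero_iff {a b : ℕ} : Nat.pair a b = 0 ↔ a = 0 ∧ b = 0 :=
  Nat.pair_eq_pair (c := 0) (d := 0)

theorem eval_rfind'_id (z : ℕ) :
    (Code.rfind' .id).eval z = if z = 0 then Part.some 0 else Part.none := by
  obtain ⟨a, m, rfl⟩ : ∃ a m, z = Nat.pair a m := ⟨_, _, (Nat.pair_unpair z).symm⟩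
  simp only [eval, Nat.unpaired, Nat.unpair_pair, eval_id, Part.map_eq_map, Part.map_some]
  split_ifs with h
  · obtain ⟨rfl, rfl⟩ := pair_eq_zero_iff.1 h
    refine Part.eq_some_iff.2 ((Part.mem_map_iff _).2 ⟨0, Nat.mem_rfind.2 ⟨?_, nofun⟩, rfl⟩)
    exact Part.mem_some_iff.2 rfl
  · refine Part.eq_none_iff'.2 fun hdom => ?_
    obtain ⟨k, hk, -⟩ := Nat.rfind_dom.1 hdom
    have hk := (Part.mem_some_iff.1 hk).symm
    rw [decide_eq_true_iff, pair_eq_zero_iff] at hk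
    exact h (pair_eq_zero_iff.2 ⟨hk.1, by omega⟩)

theorem φ_junkCode (n z : ℕ) :
    φ (encode (junkCode n)) z = if z = 0 then Part.some n else Part.none := by
  rw [φ, ofNat_encode]
  change ((Code.rfind' .id).eval z).bind (fun m => (Code.const n).eval m) = _
  rw [eval_rfind'_id]
  split_ifs <;> simp [eval_const]

theorem primrec_junkCode : Primrec fun n => encode (junkCode n) :=
  Primrec.encode.comp (primrec₂_comp.comp primrec_const (Primrec.const _))

section Stages

variable (c : Code)

def guesser : ℕ → ℕ →. ℕ := fun x u => c.eval (Nat.pair x u)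

def HasLimit (x : ℕ) : Prop := ∃ y, LConv (guesser c) x y

def latestHalting (s x : ℕ) : ℕ :=
  Nat.findGreatest (fun u => (evaln s c (Nat.pair x u)).isSome) s

def guess (s x : ℕ) : Option ℕ := evaln s c (Nat.pair x (latestHalting c s x))

/-- A computation below the latest halting one may halt late with another value without changing
the guess; counting this as a mind change makes a guess without later mind changes a limit. -/
def LateDiscovery (t x : ℕ) : Prop :=
  ∃ u < t, evaln (t - 1) c (Nat.pair x u) = none ∧ (evaln t c (Nat.pair x u)).isSome ∧
    evaln t c (Nat.pair x u) ≠ guess c t x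

def MindChange (t x : ℕ) : Prop := guess c t x ≠ guess c (t - 1) x ∨ LateDiscovery c t x

instance (t x : ℕ) : Decidable (MindChange c t x) := by
  unfold MindChange LateDiscovery; infer_instance

def lastMindChange (s x : ℕ) : ℕ := Nat.findGreatest (MindChange c · x) s

def stagePriority (s x : ℕ) : ℕ ×ₗ ℕ := toLex (lastMindChange c s x, x)

def Differs (s a b : ℕ) : Prop :=
  ∃ z < s, (evaln s (ofNat Code a) z).isSome ∧ (evaln s (ofNat Code b) z).isSome ∧
    evaln s (ofNat Code a) z ≠ evaln s (ofNat Code b) z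

def Blocks (s x' x : ℕ) : Prop :=
  (guess c s x').isSome ∧ stagePriority c s x' < stagePriority c s x ∧
    ¬ Differs s ((guess c s x').getD 0) ((guess c s x).getD 0)

def Blocked (s x : ℕ) : Prop := ∃ x' < s, Blocks c s x' x

instance (s x : ℕ) : Decidable (Blocked c s x) := by
  unfold Blocked Blocks Differs; infer_instance

def candidate (s x σ : ℕ) : Option ℕ :=
  if lastMindChange c s x = σ ∧ ¬ Blocked c s x then guess c s x else none

def stageIndex (n s : ℕ) : ℕ := (candidate c s n.unpair.1 n.unpair.2).getD (encode (junkCode n))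

end Stages

section Computability

open Primrec

variable (c : Code)

theorem primrecPred_isSome {α β : Type*} [Primcodable α] [Primcodable β] {f : α → Option β}
    (hf : Primrec f) : PrimrecPred fun a => (f a).isSome :=
  Primrec.eq.comp (option_isSome.comp hf) (const true)

theorem primrecPred_exists_lt {α : Type*} [Primcodable α] {f : α → ℕ} {R : ℕ → α → Prop}
    (hf : Primrec f) (hR : PrimrecRel R) : PrimrecPred fun a => ∃ u < f a, R u a :=
  ((PrimrecRel.exists_mem_list hR).comp (list_range.comp hf) Primrec.id).of_eq fun _ => by simp

theorem primrec₂_evaln : Primrec₂ fun s n => evaln s c n :=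
  primrec_evaln.comp ((fst.pair (const c)).pair snd)

theorem primrec₂_guess : Primrec₂ (guess c) := by
  have hlatest : Primrec₂ (latestHalting c) :=
    nat_findGreatest fst (primrecPred_isSome <| (primrec₂_evaln c).comp (fst.comp fst)
      (Primrec₂.natPair.comp (snd.comp fst) snd))
  exact (primrec₂_evaln c).comp fst (Primrec₂.natPair.comp snd hlatest)

theorem primrecRel_toLex_lt : PrimrecRel fun a b : ℕ × ℕ => toLex a < toLex b :=
  (PrimrecPred.or (nat_lt.comp (fst.comp fst) (fst.comp snd))
    (PrimrecPred.and (Primrec.eq.comp (fst.comp fst) (fst.comp snd))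
      (nat_lt.comp (snd.comp fst) (snd.comp snd)))).of_eq
    fun _ => Prod.Lex.toLex_lt_toLex.symm

theorem primrec₂_lastMindChange : Primrec₂ (lastMindChange c) := by
  have hguess := primrec₂_guess c
  have hevaln := primrec₂_evaln c
  have hchange : PrimrecPred fun p : ℕ × ℕ => guess c p.1 p.2 ≠ guess c (p.1 - 1) p.2 :=
    (Primrec.eq.comp (hguess.comp fst snd)
      (hguess.comp (nat_sub.comp fst (const 1)) snd)).not
  have hlate : PrimrecPred fun p : ℕ × ℕ => LateDiscovery c p.1 p.2 := by
    have hnew : PrimrecRel fun (u : ℕ) (p : ℕ × ℕ) =>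
        evaln (p.1 - 1) c (Nat.pair p.2 u) = none ∧ (evaln p.1 c (Nat.pair p.2 u)).isSome ∧
          evaln p.1 c (Nat.pair p.2 u) ≠ guess c p.1 p.2 := by
      have hpair : Primrec fun q : ℕ × ℕ × ℕ => Nat.pair q.2.2 q.1 :=
        Primrec₂.natPair.comp (snd.comp snd) fst
      have hnow := hevaln.comp (fst.comp snd) hpair
      exact (Primrec.eq.comp (hevaln.comp (nat_sub.comp (fst.comp snd) (const 1)) hpair)
        (const none)).and ((primrecPred_isSome hnow).and
          (Primrec.eq.comp hnow (hguess.comp (fst.comp snd) (snd.comp snd))).not)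
    exact primrecPred_exists_lt fst hnew
  exact nat_findGreatest fst ((hchange.or hlate).comp (snd.pair (snd.comp fst)))

theorem primrecPred_differs : PrimrecPred fun p : ℕ × ℕ × ℕ => Differs p.1 p.2.1 p.2.2 := by
  have hrun : ∀ {g : ℕ × ℕ × ℕ → ℕ}, Primrec g →
      Primrec fun q : ℕ × ℕ × ℕ × ℕ => evaln q.2.1 (ofNat Code (g q.2)) q.1 := fun hg =>
    primrec_evaln.comp (((fst.comp snd).pair ((Primrec.ofNat Code).comp (hg.comp snd))).pair fst)
  have ha := hrun (fst.comp snd)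
  have hb := hrun (snd.comp snd)
  exact primrecPred_exists_lt fst <| (primrecPred_isSome ha).and <|
    (primrecPred_isSome hb).and (Primrec.eq.comp ha hb).not

theorem primrecRel_blocked : PrimrecRel (Blocked c) := by
  have hguess := primrec₂_guess c
  have hlast := primrec₂_lastMindChange c
  have hblocks : PrimrecRel fun (x' : ℕ) (p : ℕ × ℕ) => Blocks c p.1 x' p.2 := by
    have hg' : Primrec fun q : ℕ × ℕ × ℕ => guess c q.2.1 q.1 := hguess.comp (fst.comp snd) fst
    have hg : Primrec fun q : ℕ × ℕ × ℕ => guess c q.2.1 q.2.2 :=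
      hguess.comp (fst.comp snd) (snd.comp snd)
    exact (primrecPred_isSome hg').and <|
      (primrecRel_toLex_lt.comp ((hlast.comp (fst.comp snd) fst).pair fst)
        ((hlast.comp (fst.comp snd) (snd.comp snd)).pair (snd.comp snd))).and <|
      primrecPred_differs.comp ((fst.comp snd).pair
        ((option_getD.comp hg' (const 0)).pair (option_getD.comp hg (const 0)))) |>.not
  exact primrecPred_exists_lt fst hblocks

theorem primrec₂_stageIndex : Primrec₂ (stageIndex c) := by
  have hx : Primrec fun p : ℕ × ℕ => p.1.unpair.1 := fst.comp (unpair.comp fst)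
  have hσ : Primrec fun p : ℕ × ℕ => p.1.unpair.2 := snd.comp (unpair.comp fst)
  have hcand : Primrec fun p : ℕ × ℕ => candidate c p.2 p.1.unpair.1 p.1.unpair.2 :=
    Primrec.ite ((Primrec.eq.comp ((primrec₂_lastMindChange c).comp snd hx) hσ).and
      ((primrecRel_blocked c).comp snd hx).not) ((primrec₂_guess c).comp snd hx) (const none)
  exact option_getD.comp hcand (primrec_junkCode.comp fst)

theorem exists_eq_guesser {ψ : ℕ → ℕ →. ℕ} (hψ : Partrec₂ ψ) : ∃ c, ψ = guesser c := by
  obtain ⟨c, hc⟩ := exists_code.1 <| Partrec.nat_iff.1 <|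
    hψ.comp (Primrec.fst.comp Primrec.unpair).to_comp (Primrec.snd.comp Primrec.unpair).to_comp
  exact ⟨c, funext₂ fun x u => by simp [guesser, hc]⟩

end Computability

section Convergence

variable {c : Code} {s t x y : ℕ}

theorem le_latestHalting {u : ℕ} (h : (evaln s c (Nat.pair x u)).isSome) :
    u ≤ latestHalting c s x := by
  obtain ⟨v, hv⟩ := Option.isSome_iff_exists.1 h
  exact Nat.le_findGreatest ((Nat.right_le_pair x u).trans (evaln_bound hv).le) h

theorem isSome_guess_iff : (guess c s x).isSome ↔ ∃ u, (evaln s c (Nat.pair x u)).isSome := by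
  refine ⟨fun h => ⟨_, h⟩, fun ⟨u, hu⟩ => ?_⟩
  obtain ⟨v, hv⟩ := Option.isSome_iff_exists.1 hu
  exact Nat.findGreatest_spec (P := fun u => (evaln s c (Nat.pair x u)).isSome)
    ((Nat.right_le_pair x u).trans (evaln_bound hv).le) hu

theorem mem_guesser_of_mem_guess {v : ℕ} (h : v ∈ guess c s x) :
    v ∈ guesser c x (latestHalting c s x) :=
  evaln_sound h

theorem eventually_guess_eq (h : LConv (guesser c) x y) : ∀ᶠ s in atTop, guess c s x = some y := by
  obtain ⟨u, hu, hafter⟩ := h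
  obtain ⟨k, hk⟩ := evaln_complete.1 hu
  filter_upwards [eventually_ge_atTop k] with s hs
  have hus : (evaln s c (Nat.pair x u)).isSome := Option.isSome_iff_exists.2 ⟨y, evaln_mono hs hk⟩
  obtain ⟨v, hv⟩ := Option.isSome_iff_exists.1 (isSome_guess_iff.2 ⟨u, hus⟩)
  have hmem : v ∈ guesser c x (latestHalting c s x) := mem_guesser_of_mem_guess hv
  rw [hv, Option.some_inj]
  rcases (le_latestHalting hus).lt_or_eq with hlt | heq
  · exact hafter _ hlt v hmem
  · exact Part.mem_unique (heq ▸ hmem) hu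

theorem eventually_evaln_pred_eq (n : ℕ) : ∀ᶠ t in atTop, evaln (t - 1) c n = evaln t c n := by
  by_cases halts : ∃ k v, evaln k c n = some v
  · obtain ⟨k, v, hk⟩ := halts
    filter_upwards [eventually_gt_atTop k] with t ht
    rw [evaln_mono (by omega : k ≤ t - 1) hk, evaln_mono ht.le hk]
  · simp only [not_exists] at halts
    exact Eventually.of_forall fun t => by
      rw [Option.eq_none_iff_forall_ne_some.2 (halts _),
        Option.eq_none_iff_forall_ne_some.2 (halts _)]

theorem eventually_not_mindChange (h : LConv (guesser c) x y) :
    ∀ᶠ t in atTop, ¬ MindChange c t x := by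
  have hguess := eventually_guess_eq h
  obtain ⟨u₀, -, hafter⟩ := h
  have hsettled : ∀ᶠ t in atTop,
      ∀ u ∈ Set.Iic u₀, evaln (t - 1) c (Nat.pair x u) = evaln t c (Nat.pair x u) :=
    (Set.finite_Iic u₀).eventually_all.2 fun u _ => eventually_evaln_pred_eq _
  filter_upwards [hguess, (tendsto_sub_atTop_nat 1).eventually hguess, hsettled]
    with t hnow hprev hold
  rintro (hne | ⟨u, -, hnone, hsome, hne⟩)
  · exact hne (hnow.trans hprev.symm)
  · rcases le_or_gt u u₀ with hle | hlt
    · rw [hold u hle] at hnone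
      simp [hnone] at hsome
    · obtain ⟨w, hw⟩ := Option.isSome_iff_exists.1 hsome
      rw [hw, hnow, hafter u hlt w (evaln_sound hw)] at hne
      exact hne rfl

theorem lastMindChange_eq_pred (h : ¬ MindChange c t x) :
    lastMindChange c t x = lastMindChange c (t - 1) x := by
  rcases t with _ | t
  · rfl
  · exact (Nat.findGreatest_succ t).trans (if_neg h)

theorem guess_eq_pred (h : ¬ MindChange c t x) : guess c t x = guess c (t - 1) x :=
  not_not.1 fun hne => h (Or.inl hne)

theorem exists_eventually_eq_of_eventually_eq_pred {α : Type*} {f : ℕ → α}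
    (h : ∀ᶠ t in atTop, f t = f (t - 1)) : ∃ a, ∀ᶠ t in atTop, f t = a := by
  obtain ⟨S, hS⟩ := eventually_atTop.1 h
  refine ⟨f S, eventually_atTop.2 ⟨S, fun s hs => ?_⟩⟩
  induction s, hs using Nat.le_induction with
  | base => rfl
  | succ s hs ih => exact (hS (s + 1) (by omega)).trans ih

theorem exists_first_halting_stage {n w : ℕ} (h : w ∈ c.eval n) :
    ∃ d, n < d ∧ evaln (d - 1) c n = none ∧ evaln d c n = some w := by
  have hex : ∃ k, (evaln k c n).isSome := by
    obtain ⟨k, hk⟩ := evaln_complete.1 h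
    exact ⟨k, Option.isSome_iff_exists.2 ⟨w, hk⟩⟩
  obtain ⟨w', hw'⟩ := Option.isSome_iff_exists.1 (Nat.find_spec hex)
  have hlt : n < Nat.find hex := evaln_bound hw'
  refine ⟨Nat.find hex, hlt, ?_, ?_⟩
  · exact Option.not_isSome_iff_eq_none.1 (Nat.find_min hex (by omega))
  · rw [hw', Part.mem_unique (evaln_sound hw') h]

theorem lconv_of_eventually (hguess : ∀ᶠ s in atTop, guess c s x = some y)
    (hstable : ∀ᶠ t in atTop, ¬ MindChange c t x) : LConv (guesser c) x y := by
  obtain ⟨S, hS⟩ := eventually_atTop.1 (hguess.and hstable)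
  refine ⟨latestHalting c S x, mem_guesser_of_mem_guess (hS S le_rfl).1, fun t ht w hw => ?_⟩
  obtain ⟨d, hd, hnone, hsome⟩ := exists_first_halting_stage hw
  by_cases hdS : d ≤ S
  · have := le_latestHalting (Option.isSome_iff_exists.2 ⟨w, evaln_mono hdS hsome⟩)
    omega
  · have hnot := (hS d (by omega)).2
    by_contra hwy
    refine hnot (Or.inr ⟨t, (Nat.right_le_pair x t).trans_lt hd, hnone, by simp [hsome], ?_⟩)
    rw [hsome, (hS d (by omega)).1]
    exact fun h => hwy (Option.some_inj.1 h)

theorem eventually_guess_eq_none_or_lt_lastMindChange (hx : ¬ HasLimit c x) (σ : ℕ) :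
    ∀ᶠ s in atTop, guess c s x = none ∨ σ < lastMindChange c s x := by
  by_cases hfreq : ∃ᶠ t in atTop, MindChange c t x
  · obtain ⟨t, hchange, hσt⟩ := (hfreq.and_eventually (eventually_gt_atTop σ)).exists
    filter_upwards [eventually_ge_atTop t] with s hs
    exact Or.inr (hσt.trans_le (Nat.le_findGreatest hs hchange))
  · have hstable : ∀ᶠ t in atTop, ¬ MindChange c t x := not_frequently.1 hfreq
    obtain ⟨o, ho⟩ := exists_eventually_eq_of_eventually_eq_pred
      (hstable.mono fun _ => guess_eq_pred)
    cases o with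
    | none => exact ho.mono fun _ hs => Or.inl hs
    | some y => exact absurd ⟨y, lconv_of_eventually ho hstable⟩ hx

theorem lt_lastMindChange (h : (guess c s x).isSome) : x < lastMindChange c s x := by
  have hex : ∃ t, (guess c t x).isSome := ⟨s, h⟩
  obtain ⟨u, hu⟩ := isSome_guess_iff.1 (Nat.find_spec hex)
  obtain ⟨v, hv⟩ := Option.isSome_iff_exists.1 hu
  have hx : x < Nat.find hex := (Nat.left_le_pair x u).trans_lt (evaln_bound hv)
  have hchange : MindChange c (Nat.find hex) x := by
    refine Or.inl fun heq => Nat.find_min hex (by omega : Nat.find hex - 1 < Nat.find hex) ?_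
    rw [← heq]
    exact Nat.find_spec hex
  exact hx.trans_le (Nat.le_findGreatest (Nat.find_min' hex h) hchange)

theorem not_differs_of_φ_eq {a b : ℕ} (h : φ a = φ b) : ¬ Differs s a b := by
  rintro ⟨z, -, ha, hb, hne⟩
  obtain ⟨va, hva⟩ := Option.isSome_iff_exists.1 ha
  obtain ⟨vb, hvb⟩ := Option.isSome_iff_exists.1 hb
  have hvb' : vb ∈ φ a z := h ▸ evaln_sound hvb
  rw [hva, hvb, Part.mem_unique (evaln_sound hva) hvb'] at hne
  exact hne rfl

theorem eventually_differs {a b : ℕ} (ha : ∀ z, (φ a z).Dom) (hb : ∀ z, (φ b z).Dom)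
    (hne : φ a ≠ φ b) : ∀ᶠ s in atTop, Differs s a b := by
  obtain ⟨z, hz⟩ := Function.ne_iff.1 hne
  obtain ⟨ka, hka⟩ := evaln_complete.1 (Part.get_mem (ha z))
  obtain ⟨kb, hkb⟩ := evaln_complete.1 (Part.get_mem (hb z))
  filter_upwards [eventually_gt_atTop z, eventually_ge_atTop ka, eventually_ge_atTop kb]
    with s hzs hkas hkbs
  have hsa := Option.mem_def.1 (evaln_mono hkas hka)
  have hsb := Option.mem_def.1 (evaln_mono hkbs hkb)
  refine ⟨z, hzs, by simp [hsa], by simp [hsb], ?_⟩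
  rw [hsa, hsb]
  exact fun heq => hz <| by
    rw [← Part.some_get (ha z), ← Part.some_get (hb z), Option.some_inj.1 heq]

end Convergence

noncomputable def limit (c : Code) (x : ℕ) : ℕ := Classical.epsilon (LConv (guesser c) x)

noncomputable def settledStage (c : Code) (x : ℕ) : ℕ :=
  Classical.epsilon fun σ => ∀ᶠ s in atTop, lastMindChange c s x = σ

noncomputable def rank (c : Code) (x : ℕ) : ℕ ×ₗ ℕ := toLex (settledStage c x, x)

def IsLeader (c : Code) (x : ℕ) : Prop :=
  HasLimit c x ∧ ∀ x', HasLimit c x' → φ (limit c x') = φ (limit c x) → rank c x ≤ rank c x'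

def LimitsTotal (c : Code) : Prop := ∀ x, HasLimit c x → ∀ z, (φ (limit c x) z).Dom

open Classical in
noncomputable def limitCandidate (c : Code) (x σ : ℕ) : Option ℕ :=
  if IsLeader c x ∧ settledStage c x = σ then some (limit c x) else none

noncomputable def enumeration (c : Code) (n : ℕ) : ℕ :=
  (limitCandidate c n.unpair.1 n.unpair.2).getD (encode (junkCode n))

section Leaders

variable {c : Code} {s x : ℕ}

theorem lconv_limit (h : HasLimit c x) : LConv (guesser c) x (limit c x) :=
  Classical.epsilon_spec h

theorem eventually_lastMindChange_eq_settledStage (h : HasLimit c x) :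
    ∀ᶠ s in atTop, lastMindChange c s x = settledStage c x := by
  obtain ⟨y, hy⟩ := h
  exact Classical.epsilon_spec (exists_eventually_eq_of_eventually_eq_pred
    ((eventually_not_mindChange hy).mono fun _ => lastMindChange_eq_pred))

theorem le_max_of_blocks {x' : ℕ} (h : Blocks c s x' x) : x' ≤ max (lastMindChange c s x) x := by
  have hx' := lt_lastMindChange h.1
  have hlt := Prod.Lex.toLex_lt_toLex.1 h.2.1
  simp only at hlt
  omega

theorem eventually_not_blocks_of_not_hasLimit {x' : ℕ} (hx : HasLimit c x)
    (hx' : ¬ HasLimit c x') : ∀ᶠ s in atTop, ¬ Blocks c s x' x := by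
  filter_upwards [eventually_guess_eq_none_or_lt_lastMindChange hx' (settledStage c x),
    eventually_lastMindChange_eq_settledStage hx] with s hs hσ
  rintro ⟨hsome, hlt, -⟩
  rcases hs with hnone | hgt
  · simp [hnone] at hsome
  · have := Prod.Lex.toLex_lt_toLex.1 hlt
    simp only [hσ] at this
    omega

theorem eventually_blocks_iff {x' : ℕ} (hx : HasLimit c x) (hx' : HasLimit c x') :
    ∀ᶠ s in atTop,
      Blocks c s x' x ↔ rank c x' < rank c x ∧ ¬ Differs s (limit c x') (limit c x) := by
  filter_upwards [eventually_guess_eq (lconv_limit hx), eventually_guess_eq (lconv_limit hx'),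
    eventually_lastMindChange_eq_settledStage hx, eventually_lastMindChange_eq_settledStage hx']
    with s hg hg' hσ hσ'
  simp [Blocks, stagePriority, rank, hg, hg', hσ, hσ']

theorem eventually_not_blocked (htot : LimitsTotal c) (h : IsLeader c x) :
    ∀ᶠ s in atTop, ¬ Blocked c s x := by
  have hx := h.1
  have hcandidates : ∀ᶠ s in atTop,
      ∀ x' ∈ Set.Iic (max (settledStage c x) x), ¬ Blocks c s x' x := by
    refine (Set.finite_Iic _).eventually_all.2 fun x' _ => ?_
    by_cases hx' : HasLimit c x'
    · by_cases hsame : φ (limit c x') = φ (limit c x)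
      · filter_upwards [eventually_blocks_iff hx hx'] with s hs
        exact fun hb => (h.2 x' hx' hsame).not_gt (hs.1 hb).1
      · filter_upwards [eventually_blocks_iff hx hx',
          eventually_differs (htot x' hx') (htot x hx) hsame] with s hs hdiff
        exact fun hb => (hs.1 hb).2 hdiff
    · exact eventually_not_blocks_of_not_hasLimit hx hx'
  filter_upwards [hcandidates, eventually_lastMindChange_eq_settledStage hx] with s hs hσ
  rintro ⟨x', -, hb⟩
  exact hs x' (hσ ▸ le_max_of_blocks hb) hb

theorem eventually_blocked (hx : HasLimit c x) (h : ¬ IsLeader c x) :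
    ∀ᶠ s in atTop, Blocked c s x := by
  obtain ⟨x₀, hx₀, hsame, hlt⟩ : ∃ x₀, HasLimit c x₀ ∧ φ (limit c x₀) = φ (limit c x) ∧
      rank c x₀ < rank c x := by
    simpa [IsLeader, hx] using h
  filter_upwards [eventually_blocks_iff hx hx₀, eventually_gt_atTop x₀] with s hs hx₀s
  exact ⟨x₀, hx₀s, hs.2 ⟨hlt, not_differs_of_φ_eq hsame⟩⟩

theorem eventually_candidate_eq (htot : LimitsTotal c) (x σ : ℕ) :
    ∀ᶠ s in atTop, candidate c s x σ = limitCandidate c x σ := by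
  by_cases hx : HasLimit c x
  · by_cases hlead : IsLeader c x
    · filter_upwards [eventually_lastMindChange_eq_settledStage hx,
        eventually_guess_eq (lconv_limit hx), eventually_not_blocked htot hlead] with s hσ hg hnb
      simp [candidate, limitCandidate, hσ, hg, hnb, hlead]
    · filter_upwards [eventually_blocked hx hlead] with s hb
      simp [candidate, limitCandidate, hb, hlead]
  · have hnot : ¬ IsLeader c x := fun h => hx h.1
    filter_upwards [eventually_guess_eq_none_or_lt_lastMindChange hx σ] with s hs
    rcases hs with hnone | hgt
    · simp [candidate, limitCandidate, hnone, hnot]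
    · simp [candidate, limitCandidate, hgt.ne', hnot]

theorem lconv_stageIndex (htot : LimitsTotal c) (n : ℕ) :
    LConv (fun n s => Part.some (stageIndex c n s)) n (enumeration c n) :=
  lconv_some_of_eventually_eq <| (eventually_candidate_eq htot _ _).mono fun s hs => by
    rw [stageIndex, hs, enumeration]

theorem φ_ne_φ_junkCode {a : ℕ} (ha : ∀ z, (φ a z).Dom) (n : ℕ) :
    φ a ≠ φ (encode (junkCode n)) := fun h => by
  simpa [h, φ_junkCode] using ha 1

theorem φ_junkCode_injective : Function.Injective fun n => φ (encode (junkCode n)) :=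
  fun m n h => by simpa [φ_junkCode] using congrFun h 0

theorem limitCandidate_eq_some {σ a : ℕ} :
    limitCandidate c x σ = some a ↔ IsLeader c x ∧ settledStage c x = σ ∧ limit c x = a := by
  simp [limitCandidate, and_assoc]

theorem φ_enumeration_injective (htot : LimitsTotal c) :
    Function.Injective fun n => φ (enumeration c n) := by
  intro m n hmn
  rcases hm : limitCandidate c m.unpair.1 m.unpair.2 with _ | a <;>
    rcases hn : limitCandidate c n.unpair.1 n.unpair.2 with _ | b <;>
    simp only [enumeration, hm, hn, Option.getD_none, Option.getD_some] at hmn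
  · exact φ_junkCode_injective hmn
  · obtain ⟨hlead, -, rfl⟩ := limitCandidate_eq_some.1 hn
    exact absurd hmn.symm (φ_ne_φ_junkCode (htot _ hlead.1) m)
  · obtain ⟨hlead, -, rfl⟩ := limitCandidate_eq_some.1 hm
    exact absurd hmn (φ_ne_φ_junkCode (htot _ hlead.1) n)
  · obtain ⟨hlead, hσ, rfl⟩ := limitCandidate_eq_some.1 hm
    obtain ⟨hlead', hσ', rfl⟩ := limitCandidate_eq_some.1 hn
    have hrank := le_antisymm (hlead.2 _ hlead'.1 hmn.symm) (hlead'.2 _ hlead.1 hmn)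
    obtain ⟨hsettled, hx⟩ := Prod.ext_iff.1 (toLex.injective hrank)
    rw [← Nat.pair_unpair m, ← Nat.pair_unpair n, ← hσ, ← hσ']
    simp only at hsettled hx
    rw [hsettled, hx]

theorem exists_φ_enumeration_eq (hx : HasLimit c x) : ∃ n, φ (enumeration c n) = φ (limit c x) := by
  let S := {x' | HasLimit c x' ∧ φ (limit c x') = φ (limit c x)}
  have hS : S.Nonempty := ⟨x, hx, rfl⟩
  set x₀ := Function.argminOn (rank c) S hS
  obtain ⟨hx₀, hsame⟩ : x₀ ∈ S := Function.argminOn_mem (rank c) S hS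
  have hlead : IsLeader c x₀ :=
    ⟨hx₀, fun x' hx' h' => Function.argminOn_le (rank c) S ⟨hx', h'.trans hsame⟩⟩
  refine ⟨Nat.pair x₀ (settledStage c x₀), ?_⟩
  simp [enumeration, limitCandidate, hlead, hsame]

end Leaders

end CanonicalEnumeration

open CanonicalEnumeration

theorem stmt10 (ψ : ℕ → ℕ →. ℕ) (hψ : Partrec₂ ψ)
    (htot : ∀ x y, LConv ψ x y → ∀ z, ((φ y) z).Dom) :
    ∃ (P' : ℕ → ℕ) (ψ' : ℕ → ℕ →. ℕ), Partrec₂ ψ' ∧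
      (∀ n, LConv ψ' n (P' n)) ∧
      (∀ m n, m ≠ n → ∃ z, φ (P' m) z ≠ φ (P' n) z) ∧
      (∀ x y, LConv ψ x y → ∃ n, ∀ z, φ (P' n) z = φ y z) := by
  obtain ⟨c, rfl⟩ := exists_eq_guesser hψ
  have hlimits : LimitsTotal c := fun x hx => htot x _ (lconv_limit hx)
  refine ⟨enumeration c, fun n s => Part.some (stageIndex c n s),
    (primrec₂_stageIndex c).to_comp.partrec₂, lconv_stageIndex hlimits,
    fun m n hmn => Function.ne_iff.1 ((φ_enumeration_injective hlimits).ne hmn),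
    fun x y hxy => ?_⟩
  obtain ⟨n, hn⟩ := exists_φ_enumeration_eq ⟨y, hxy⟩
  rw [(lconv_limit ⟨y, hxy⟩).unique hxy] at hn
  exact ⟨n, congrFun hn⟩
end

section
/- If a class of total recursive functions has a canonical enumeration computable in the limit, then its complexity bound enumeration is computable in the limit: the enumeration of all indices i for which there is an index j in the canonical enumeration with φ_i(x) = φ_j(x) for all x and Φ_i(x) ≤ Φ_j(x) for all x. -/
open Nat.Partrec (Code)

/-- TM_i is pointwise at least as fast as TM_j: whenever TM_j halts within k steps,
so does TM_i. -/
def Faster (i j : ℕ) : Prop :=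
  ∀ x k, (Nat.Partrec.Code.evaln k (Denumerable.ofNat Code j) x).isSome →
    (Nat.Partrec.Code.evaln k (Denumerable.ofNat Code i) x).isSome

/-! A partial recursive guesser can be traded for a primitive recursive one with the same limits:
at stage `t`, report the value of the latest guess that halts within `t` steps.

Because the canonical functions are total, `i` computes the `m`-th of them at least as fast iff
every computation of `P m` halting within `k` steps with output `v` is matched by `i` within `k`
steps. This is a `Π₁` property whose stage-`t` truncations are decidable and eventually correct.
The guess for the pair `⟨i, m⟩` at stage `t` is therefore `i` if the truncation holds against the
stage-`t` approximation of `P m`, and the stage-`t` approximation of `P 0` otherwise. -/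

open Nat.Partrec.Code Filter

theorem Partrec₂.exists_code_eval_pair {ψ : ℕ → ℕ →. ℕ} (hψ : Partrec₂ ψ) :
    ∃ c : Code, ψ = fun m u => c.eval (Nat.pair m u) := by
  obtain ⟨c, hc⟩ := exists_code.1 <| Partrec.nat_iff.1 <|
    hψ.comp (Computable.fst.comp .unpair) (Computable.snd.comp .unpair)
  exact ⟨c, funext₂ fun m u => by simp [hc]⟩

def latestGuess (c : Code) (m t : ℕ) : ℕ :=
  (evaln t c (Nat.pair m (Nat.findGreatest (fun u => (evaln t c (Nat.pair m u)).isSome) t))).getD 0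

theorem primrec₂_latestGuess (c : Code) : Primrec₂ (latestGuess c) := by
  have hrun : Primrec₂ fun (a : ℕ × ℕ) (u : ℕ) => evaln a.2 c (Nat.pair a.1 u) :=
    (primrec_evaln.comp (((Primrec.snd.comp .fst).pair (.const c)).pair
      (Primrec₂.natPair.comp (Primrec.fst.comp .fst) .snd))).to₂
  have hlast : Primrec fun a : ℕ × ℕ =>
      Nat.findGreatest (fun u => (evaln a.2 c (Nat.pair a.1 u)).isSome) a.2 :=
    Primrec.nat_findGreatest .snd
      (Primrec₂.primrecRel ((Primrec.option_isSome.comp₂ hrun).of_eq fun _ _ => by simp))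
  exact (Primrec.option_getD.comp (hrun.comp .id hlast) (.const 0)).to₂

theorem eventually_latestGuess_eq {c : Code} {m v : ℕ}
    (h : LConv (fun m u => c.eval (Nat.pair m u)) m v) :
    ∀ᶠ t in atTop, latestGuess c m t = v := by
  obtain ⟨u₀, hu₀, hlater⟩ := h
  obtain ⟨s₀, hs₀⟩ := evaln_complete.1 hu₀
  filter_upwards [eventually_ge_atTop u₀, eventually_ge_atTop s₀] with t hut hst
  set U := Nat.findGreatest (fun u => (evaln t c (Nat.pair m u)).isSome) t
  have hhalts : (evaln t c (Nat.pair m u₀)).isSome := Option.isSome_of_mem (evaln_mono hst hs₀)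
  have hU : u₀ ≤ U := Nat.le_findGreatest hut hhalts
  obtain ⟨w, hw⟩ := Option.isSome_iff_exists.1
    (Nat.findGreatest_spec (P := fun u => (evaln t c (Nat.pair m u)).isSome) hut hhalts)
  have hwU : w ∈ c.eval (Nat.pair m U) := evaln_sound hw
  have hwv : w = v := by
    rcases hU.eq_or_lt with rfl | hlt
    · exact Part.mem_unique hwU hu₀
    · exact hlater U hlt w hwU
  simp only [latestGuess, ← hwv, Option.mem_def.1 hw, Option.getD_some]

theorem Partrec₂.exists_primrec_limit_approx {ψ : ℕ → ℕ →. ℕ} (hψ : Partrec₂ ψ) :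
    ∃ g : ℕ → ℕ → ℕ, Primrec₂ g ∧ ∀ m v, LConv ψ m v → ∀ᶠ t in atTop, g m t = v := by
  obtain ⟨c, rfl⟩ := hψ.exists_code_eval_pair
  exact ⟨latestGuess c, primrec₂_latestGuess c, fun _ _ => eventually_latestGuess_eq⟩

theorem lconv_some_of_eventually {g : ℕ → ℕ → ℕ} {n v : ℕ} (h : ∀ᶠ t in atTop, g n t = v) :
    LConv (fun n t => Part.some (g n t)) n v := by
  obtain ⟨u, hu⟩ := eventually_atTop.1 h
  refine ⟨u, by simp [hu u le_rfl], fun t ht w hw => ?_⟩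
  rw [Part.mem_some_iff.1 hw, hu t ht.le]

theorem Option.forall_mem_imp_mem_iff {α : Type*} (o o' : Option α) :
    (∀ v ∈ o, v ∈ o') ↔ o = none ∨ o' = o := by
  cases o <;> simp [eq_comm]

def StepDominates (i j : ℕ) : Prop :=
  ∀ x k, ∀ v ∈ evaln k (Denumerable.ofNat Code j) x, v ∈ evaln k (Denumerable.ofNat Code i) x

def StepDominatesBelow (t i j : ℕ) : Prop :=
  ∀ x < t, ∀ k < t, ∀ v ∈ evaln k (Denumerable.ofNat Code j) x,
    v ∈ evaln k (Denumerable.ofNat Code i) x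

instance (t i j : ℕ) : Decidable (StepDominatesBelow t i j) := by
  unfold StepDominatesBelow; infer_instance

theorem stepDominates_iff_forall_below {i j : ℕ} :
    StepDominates i j ↔ ∀ t, StepDominatesBelow t i j :=
  ⟨fun h _ x _ k _ => h x k,
    fun h x k => h (max x k + 1) x (by omega) k (by omega)⟩

theorem StepDominatesBelow.mono {t t' i j : ℕ} (h : StepDominatesBelow t' i j) (ht : t ≤ t') :
    StepDominatesBelow t i j :=
  fun x hx k hk => h x (hx.trans_le ht) k (hk.trans_le ht)

theorem eventually_stepDominatesBelow_iff (i j : ℕ) :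
    ∀ᶠ t in atTop, (StepDominatesBelow t i j ↔ StepDominates i j) := by
  by_cases h : StepDominates i j
  · exact .of_forall fun t => iff_of_true (stepDominates_iff_forall_below.1 h t) h
  · obtain ⟨t₀, ht₀⟩ := not_forall.1 (mt stepDominates_iff_forall_below.2 h)
    filter_upwards [eventually_ge_atTop t₀] with t ht
    exact iff_of_false (fun hb => ht₀ (hb.mono ht)) h

theorem primrecPred_stepDominatesBelow :
    PrimrecPred fun q : ℕ × ℕ × ℕ => StepDominatesBelow q.1 q.2.1 q.2.2 := by
  have hrun {f : ℕ × (ℕ × ℕ × ℕ) × ℕ → ℕ} (hf : Primrec f) :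
      Primrec fun r : ℕ × (ℕ × ℕ × ℕ) × ℕ => evaln r.1 (Denumerable.ofNat Code (f r)) r.2.2 :=
    primrec_evaln.comp ((Primrec.fst.pair ((Primrec.ofNat Code).comp hf)).pair
      (Primrec.snd.comp .snd))
  have hj := hrun (Primrec.snd.comp (Primrec.snd.comp (Primrec.fst.comp .snd)))
  have hi := hrun (Primrec.fst.comp (Primrec.snd.comp (Primrec.fst.comp .snd)))
  have hstep : PrimrecRel fun (k : ℕ) (b : (ℕ × ℕ × ℕ) × ℕ) =>
      ∀ v ∈ evaln k (Denumerable.ofNat Code b.1.2.2) b.2,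
        v ∈ evaln k (Denumerable.ofNat Code b.1.2.1) b.2 :=
    (PrimrecPred.or (Primrec.eq.comp hj (.const none)) (Primrec.eq.comp hi hj)).of_eq
      fun _ => (Option.forall_mem_imp_mem_iff _ _).symm
  have hx : PrimrecRel fun (x : ℕ) (q : ℕ × ℕ × ℕ) => ∀ k < q.1,
      ∀ v ∈ evaln k (Denumerable.ofNat Code q.2.2) x, v ∈ evaln k (Denumerable.ofNat Code q.2.1) x :=
    (hstep.forall_mem_list.comp (Primrec.list_range.comp (Primrec.fst.comp .snd))
      (Primrec.snd.pair .fst)).of_eq fun _ => by simp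
  exact (hx.forall_mem_list.comp (Primrec.list_range.comp .fst) .id).of_eq
    fun _ => by simp [StepDominatesBelow]

theorem StepDominates.faster {i j : ℕ} (h : StepDominates i j) : Faster i j := by
  intro x k hj
  obtain ⟨v, hv⟩ := Option.isSome_iff_exists.1 hj
  exact Option.isSome_of_mem (h x k v hv)

theorem stepDominates_of_eq_of_faster {i j : ℕ} (heq : ∀ x, φ i x = φ j x) (hF : Faster i j) :
    StepDominates i j := by
  intro x k v hv
  obtain ⟨w, hw⟩ := Option.isSome_iff_exists.1 (hF x k (Option.isSome_of_mem hv))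
  have hwj : w ∈ φ j x := heq x ▸ evaln_sound hw
  rwa [Part.mem_unique hwj (evaln_sound hv)] at hw

theorem StepDominates.eq_of_dom {i j : ℕ} (h : StepDominates i j) (htot : ∀ x, (φ j x).Dom)
    (x : ℕ) : φ i x = φ j x := by
  obtain ⟨v, hv⟩ := Part.dom_iff_mem.1 (htot x)
  obtain ⟨k, hk⟩ := evaln_complete.1 hv
  have hvi : v ∈ φ i x := evaln_sound (h x k v hk)
  exact (Part.eq_some_iff.2 hvi).trans (Part.eq_some_iff.2 hv).symm

theorem stepDominates_iff {i j : ℕ} (htot : ∀ x, (φ j x).Dom) :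
    StepDominates i j ↔ (∀ x, φ i x = φ j x) ∧ Faster i j :=
  ⟨fun h => ⟨h.eq_of_dom htot, h.faster⟩, fun h => stepDominates_of_eq_of_faster h.1 h.2⟩

open Classical in
-- Failing pairs are sent to `P 0`, which lies in the class itself.
noncomputable def complexityBoundEnum (P : ℕ → ℕ) (n : ℕ) : ℕ :=
  if StepDominates n.unpair.1 (P n.unpair.2) then n.unpair.1 else P 0

def complexityBoundGuess (g : ℕ → ℕ → ℕ) (n t : ℕ) : ℕ :=
  if StepDominatesBelow t n.unpair.1 (g n.unpair.2 t) then n.unpair.1 else g 0 t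

theorem primrec₂_complexityBoundGuess {g : ℕ → ℕ → ℕ} (hg : Primrec₂ g) :
    Primrec₂ (complexityBoundGuess g) := by
  have hi : Primrec fun q : ℕ × ℕ => q.1.unpair.1 := Primrec.fst.comp (Primrec.unpair.comp .fst)
  have hm : Primrec fun q : ℕ × ℕ => q.1.unpair.2 := Primrec.snd.comp (Primrec.unpair.comp .fst)
  exact Primrec.ite (primrecPred_stepDominatesBelow.comp
      (Primrec.snd.pair (hi.pair (hg.comp hm .snd))))
    hi (hg.comp (.const 0) .snd)

theorem eventually_complexityBoundGuess_eq {P : ℕ → ℕ} {g : ℕ → ℕ → ℕ}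
    (hg : ∀ m, ∀ᶠ t in atTop, g m t = P m) (n : ℕ) :
    ∀ᶠ t in atTop, complexityBoundGuess g n t = complexityBoundEnum P n := by
  filter_upwards [hg n.unpair.2, hg 0, eventually_stepDominatesBelow_iff n.unpair.1 (P n.unpair.2)]
    with t hgm hg0 hbelow
  rw [complexityBoundGuess, complexityBoundEnum, hgm, hg0]
  split_ifs <;> tauto

theorem stmt11_general (P : ℕ → ℕ) (ψ : ℕ → ℕ →. ℕ) (hψ : Partrec₂ ψ)
    (hlim : ∀ n, LConv ψ n (P n))
    (htot : ∀ n x, ((φ (P n)) x).Dom) :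
    ∃ (E : ℕ → ℕ) (ψ' : ℕ → ℕ →. ℕ), Partrec₂ ψ' ∧
      (∀ n, LConv ψ' n (E n)) ∧
      (∀ n, ∃ m, (∀ x, φ (E n) x = φ (P m) x) ∧ Faster (E n) (P m)) ∧
      (∀ i, (∃ m, (∀ x, φ i x = φ (P m) x) ∧ Faster i (P m)) → ∃ n, E n = i) := by
  obtain ⟨g, hg, hgψ⟩ := hψ.exists_primrec_limit_approx
  have hgP : ∀ m, ∀ᶠ t in atTop, g m t = P m := fun m => hgψ m _ (hlim m)
  refine ⟨complexityBoundEnum P, fun n t => Part.some (complexityBoundGuess g n t),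
    (primrec₂_complexityBoundGuess hg).to_comp,
    fun n => lconv_some_of_eventually (eventually_complexityBoundGuess_eq hgP n),
    fun n => ?_, fun i ⟨m, hm⟩ => ⟨Nat.pair i m, ?_⟩⟩
  · unfold complexityBoundEnum
    split_ifs with h
    · exact ⟨_, (stepDominates_iff (htot _)).1 h⟩
    · exact ⟨0, fun _ => rfl, fun _ _ => id⟩
  · simp [complexityBoundEnum, (stepDominates_iff (htot m)).2 hm]

theorem stmt11 (P : ℕ → ℕ) (ψ : ℕ → ℕ →. ℕ) (hψ : Partrec₂ ψ)
    (hlim : ∀ n, LConv ψ n (P n))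
    (htot : ∀ n x, ((φ (P n)) x).Dom)
    (hcanon : ∀ m n, m ≠ n → ∃ z, φ (P m) z ≠ φ (P n) z) :
    ∃ (E : ℕ → ℕ) (ψ' : ℕ → ℕ →. ℕ), Partrec₂ ψ' ∧
      (∀ n, LConv ψ' n (E n)) ∧
      (∀ n, ∃ m, (∀ x, φ (E n) x = φ (P m) x) ∧ Faster (E n) (P m)) ∧
      (∀ i, (∃ m, (∀ x, φ i x = φ (P m) x) ∧ Faster i (P m)) → ∃ n, E n = i) :=
  stmt11_general P ψ hψ hlim htot
end

section
/- The complete enumeration of all total recursive functions is not computable in the limit by any l-total property: there is no l-total limiting-computable P such that every index j with φ_j total equals P(x) for some x. -/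
/-!
If the total indices were exactly the l-limits `P x` of a partial recursive guessing function,
the set of total indices would be `Σ₂`: `j` is total iff for some input `x` and stage `s₀`, the
latest guess that has halted within `s` steps equals `j` for every `s ≥ s₀`, and that guess is
primitive recursive in `(x, s)`. But by the recursion theorem no computable `R` gives
`Tot = {j | ∃ n ∀ k, R j n k}`: take `j` with `φ j m = μ k. ¬ R j m k`; then `j` is total iff
`∀ m ∃ k, ¬ R j m k`, i.e. iff it is not.
-/

open Nat.Partrec (Code)

open Nat.Partrec.Code Filter Encodable

def totalIndices : Set ℕ := {j | ∀ m, (φ j m).Dom}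

def IsSigma2 (S : Set ℕ) : Prop :=
  ∃ R : ℕ → ℕ → ℕ → Prop, ComputablePred (fun q : ℕ × ℕ × ℕ => R q.1 q.2.1 q.2.2) ∧
    ∀ j, j ∈ S ↔ ∃ n, ∀ k, R j n k

theorem not_isSigma2_totalIndices : ¬ IsSigma2 totalIndices := by
  rintro ⟨R, hR, hS⟩
  classical
  have hsearch : Partrec₂ fun (c : Code) (m : ℕ) =>
      Nat.rfind fun k => Part.some (decide ¬R (encode c) m k) :=
    Partrec.rfind <| Computable.partrec <| hR.not.decide.comp <|
      (Computable.encode.comp (Computable.fst.comp .fst)).pair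
        ((Computable.snd.comp .fst).pair .snd)
  obtain ⟨c, hc⟩ := fixed_point₂ hsearch
  have hdom : ∀ m, (φ (encode c) m).Dom ↔ ∃ k, ¬R (encode c) m k := fun m => by
    rw [φ, Denumerable.ofNat_encode, hc]
    exact Nat.rfind_dom.trans <| by simp
  have hdiag : encode c ∈ totalIndices ↔ encode c ∉ totalIndices :=
    calc encode c ∈ totalIndices ↔ ∀ m, ∃ k, ¬R (encode c) m k := forall_congr' hdom
      _ ↔ ¬∃ m, ∀ k, R (encode c) m k := by simp only [not_exists, not_forall]
      _ ↔ encode c ∉ totalIndices := (hS _).not.symm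
  exact iff_not_self hdiag

theorem isSigma2_of_eventually {g : ℕ → ℕ → Option ℕ} (hg : Primrec₂ g) :
    IsSigma2 {j | ∃ x, ∀ᶠ s in atTop, g x s = some j} := by
  refine ⟨fun j n k => g n.unpair.1 (n.unpair.2 + k) = some j, ?_, fun j => ?_⟩
  · refine PrimrecPred.computablePred <| Primrec.eq.comp (hg.comp ?_ ?_)
      (Primrec.option_some.comp .fst)
    · exact Primrec.fst.comp (Primrec.unpair.comp (Primrec.fst.comp .snd))
    · exact Primrec.nat_add.comp (Primrec.snd.comp (Primrec.unpair.comp (Primrec.fst.comp .snd)))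
        (Primrec.snd.comp .snd)
  simp only [Set.mem_ofPred_eq, eventually_atTop]
  constructor
  · rintro ⟨x, s₀, hs₀⟩
    exact ⟨Nat.pair x s₀, fun k => by simpa using hs₀ (s₀ + k) (Nat.le_add_right _ _)⟩
  · rintro ⟨n, hn⟩
    refine ⟨n.unpair.1, n.unpair.2, fun s hs => ?_⟩
    simpa [Nat.add_sub_cancel' hs] using hn (s - n.unpair.2)

section Guess

variable (c : Code)

def lastHalt (x s : ℕ) : ℕ :=
  Nat.findGreatest (fun t => (evaln s c (Nat.pair x t)).isSome) s

def stageGuess (x s : ℕ) : Option ℕ :=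
  evaln s c (Nat.pair x (lastHalt c x s))

theorem primrec_stageGuess : Primrec₂ (stageGuess c) := by
  have hrun : Primrec₂ fun (p : ℕ × ℕ) (t : ℕ) => evaln p.2 c (Nat.pair p.1 t) :=
    primrec_evaln.comp <| ((Primrec.snd.comp .fst).pair (.const c)).pair
      (Primrec₂.natPair.comp (Primrec.fst.comp .fst) .snd)
  have hlast : Primrec fun p : ℕ × ℕ => lastHalt c p.1 p.2 :=
    Primrec.nat_findGreatest .snd <|
      Primrec.eq.comp (Primrec.option_isSome.comp hrun) (Primrec.const true)
  exact hrun.comp .id hlast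

variable {c}

theorem eventually_stageGuess_eq {x v : ℕ} (h : LConv (fun x t => c.eval (Nat.pair x t)) x v) :
    ∀ᶠ s in atTop, stageGuess c x s = some v := by
  obtain ⟨u, hu, hlater⟩ := h
  obtain ⟨k, hk⟩ := evaln_complete.1 hu
  filter_upwards [eventually_ge_atTop k, eventually_ge_atTop u] with s hks hus
  have hvu : evaln s c (Nat.pair x u) = some v := evaln_mono hks hk
  have hhalt : (evaln s c (Nat.pair x u)).isSome := by simp [hvu]
  have hle : u ≤ lastHalt c x s := Nat.le_findGreatest hus hhalt
  obtain ⟨w, hw⟩ : ∃ w, stageGuess c x s = some w :=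
    Option.isSome_iff_exists.1 <|
      Nat.findGreatest_spec (P := fun t => (evaln s c (Nat.pair x t)).isSome) hus hhalt
  have hwv : w = v := by
    rcases hle.lt_or_eq with hlt | heq
    · exact hlater _ hlt w (evaln_sound hw)
    · rw [stageGuess, ← heq, hvu] at hw
      exact (Option.some_inj.1 hw).symm
  rw [hw, hwv]

end Guess

theorem isSigma2_range_of_lConv {ψ : ℕ → ℕ →. ℕ} (hψ : Partrec₂ ψ) {P : ℕ → ℕ}
    (hP : ∀ x, LConv ψ x (P x)) : IsSigma2 (Set.range P) := by
  obtain ⟨c, hc⟩ := exists_code.1 <| Partrec.nat_iff.1 <|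
    hψ.comp (Computable.fst.comp .unpair) (Computable.snd.comp .unpair)
  have hψc : ψ = fun x t => c.eval (Nat.pair x t) := by
    funext x t
    simp [hc]
  subst hψc
  convert isSigma2_of_eventually (primrec_stageGuess c) using 1
  ext j
  refine ⟨fun ⟨x, hx⟩ => ⟨x, hx ▸ eventually_stageGuess_eq (hP x)⟩, fun ⟨x, hx⟩ => ⟨x, ?_⟩⟩
  obtain ⟨s, hPs, hjs⟩ := ((eventually_stageGuess_eq (hP x)).and hx).exists
  exact Option.some_inj.1 (hPs.symm.trans hjs)

theorem stmt12 :
    ¬ ∃ (P : ℕ → ℕ) (ψ : ℕ → ℕ →. ℕ), Partrec₂ ψ ∧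
      (∀ x, LConv ψ x (P x)) ∧
      (∀ x m, ((φ (P x)) m).Dom) ∧
      (∀ j, (∀ m, ((φ j) m).Dom) → ∃ x, P x = j) := by
  rintro ⟨P, ψ, hψ, hP, htotal, hcomplete⟩
  have hrange : totalIndices = Set.range P :=
    Set.Subset.antisymm (fun j hj => hcomplete j hj) (Set.range_subset_iff.2 htotal)
  exact not_isSigma2_totalIndices (hrange ▸ isSigma2_range_of_lConv hψ hP)
end

section
/- For any total recursive function computed by TM_i, the complete enumeration of all indices j such that TM_j computes the same total function as TM_i is not computable in the limit by any property P, l-total or l-partial: there is no limiting-computable P such that for all j, φ_j = φ_i (as total functions) if and only if P(x) = j for some x. -/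
open Nat.Partrec (Code)

/-!
Suppose `ψ` enumerated, in the limit, exactly the indices of `φ i`. By the recursion theorem there
is an index `e` whose program, on input `n`, waits until every guess `e` that `ψ` makes at a
position `⟪x, u⟫ ≤ n` is contradicted by a later convergent guess `ψ x t ≠ e` with `t > u`, and
then outputs `φ i n`. If `ψ x` converges to `e` in the limit, that guess is never contradicted, so
`φ e` diverges on all large inputs and differs from the total `φ i`. Otherwise every guess `e` is
eventually contradicted, so `φ e = φ i` and `e` must be a limit value after all.
-/

open Nat.Partrec.Code Filter

namespace PrimrecPred

variable {α : Type*} [Primcodable α]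

theorem exists_le_bound {R : α → ℕ → Prop} {f : α → ℕ} (hR : PrimrecRel R) (hf : Primrec f) :
    PrimrecPred fun a => ∃ x ≤ f a, R a x :=
  ((PrimrecRel.exists_mem_list hR.swap).comp (Primrec.list_range.comp (Primrec.succ.comp hf))
    Primrec.id).of_eq fun a => by simp [Function.swap]

theorem forall_le_bound {R : α → ℕ → Prop} {f : α → ℕ} (hR : PrimrecRel R) (hf : Primrec f) :
    PrimrecPred fun a => ∀ x ≤ f a, R a x :=
  ((PrimrecRel.forall_mem_list hR.swap).comp (Primrec.list_range.comp (Primrec.succ.comp hf))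
    Primrec.id).of_eq fun a => by simp [Function.swap]

end PrimrecPred

namespace CompleteEnumeration

def guesser (c : Code) : ℕ → ℕ →. ℕ := fun x t => c.eval (Nat.pair x t)

theorem exists_guesser_eq {ψ : ℕ → ℕ →. ℕ} (hψ : Partrec₂ ψ) : ∃ c, guesser c = ψ := by
  obtain ⟨c, hc⟩ := exists_code.mp (Partrec₂.unpaired'.mpr hψ)
  exact ⟨c, funext₂ fun x t => by simp [guesser, hc, Nat.unpaired]⟩

/-- `p` encodes the position `⟪x, u⟫` of the guess `ψ x u`. -/
def Revoked (c : Code) (e s p : ℕ) : Prop :=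
  ∃ t ≤ s, p.unpair.2 < t ∧ evaln s c (Nat.pair p.unpair.1 t) ≠ none ∧
    evaln s c (Nat.pair p.unpair.1 t) ≠ some e

def AllRevoked (c : Code) (e n s : ℕ) : Prop :=
  n ≤ s ∧ ∀ p ≤ n, evaln s c p = some e → Revoked c e s p

instance (c : Code) (e n s : ℕ) : Decidable (AllRevoked c e n s) := by
  unfold AllRevoked Revoked; infer_instance

theorem primrecPred_revoked (c : Code) :
    PrimrecPred fun a : ℕ × ℕ × ℕ => Revoked c a.1 a.2.1 a.2.2 := by
  have hev : Primrec₂ fun (s m : ℕ) => evaln s c m :=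
    primrec_evaln.comp ((Primrec.fst.pair (Primrec.const c)).pair Primrec.snd)
  have hlater : Primrec₂ fun (a : ℕ × ℕ × ℕ) (t : ℕ) =>
      evaln a.2.1 c (Nat.pair a.2.2.unpair.1 t) :=
    hev.comp (Primrec.fst.comp (Primrec.snd.comp Primrec.fst))
      (Primrec₂.natPair.comp
        (Primrec.fst.comp (Primrec.unpair.comp (Primrec.snd.comp (Primrec.snd.comp Primrec.fst))))
        Primrec.snd)
  refine PrimrecPred.exists_le_bound ?_ (Primrec.fst.comp Primrec.snd)
  exact (Primrec.nat_lt.comp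
      (Primrec.snd.comp (Primrec.unpair.comp (Primrec.snd.comp (Primrec.snd.comp Primrec.fst))))
      Primrec.snd).and
    ((Primrec.eq.comp hlater (Primrec.const none)).not.and
      (Primrec.eq.comp hlater (Primrec.option_some.comp (Primrec.fst.comp Primrec.fst))).not)

theorem primrecPred_allRevoked (c : Code) :
    PrimrecPred fun a : ℕ × ℕ × ℕ => AllRevoked c a.1 a.2.1 a.2.2 := by
  have hguess : PrimrecRel fun (a : ℕ × ℕ × ℕ) (p : ℕ) => evaln a.2.2 c p = some a.1 :=
    Primrec.eq.comp
      (primrec_evaln.comp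
        (((Primrec.snd.comp (Primrec.snd.comp Primrec.fst)).pair (Primrec.const c)).pair
          Primrec.snd))
      (Primrec.option_some.comp (Primrec.fst.comp Primrec.fst))
  have hrevoked : PrimrecRel fun (a : ℕ × ℕ × ℕ) (p : ℕ) => Revoked c a.1 a.2.2 p :=
    (primrecPred_revoked c).comp
      ((Primrec.fst.comp Primrec.fst).pair
        ((Primrec.snd.comp (Primrec.snd.comp Primrec.fst)).pair Primrec.snd))
  have hrevokedIfGuessed : PrimrecRel fun (a : ℕ × ℕ × ℕ) (p : ℕ) =>
      evaln a.2.2 c p = some a.1 → Revoked c a.1 a.2.2 p :=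
    (hguess.not.or hrevoked).of_eq fun _ => imp_iff_not_or.symm
  exact (Primrec.nat_le.comp (Primrec.fst.comp Primrec.snd) (Primrec.snd.comp Primrec.snd)).and
    (PrimrecPred.forall_le_bound hrevokedIfGuessed (Primrec.fst.comp Primrec.snd))

noncomputable def diagonal (c : Code) (i : ℕ) (d : Code) (n : ℕ) : Part ℕ :=
  (Nat.rfind fun s => Part.some (decide (AllRevoked c (Encodable.encode d) n s))).bind
    fun _ => φ i n

theorem mem_diagonal {c : Code} {i : ℕ} {d : Code} {n v : ℕ} :
    v ∈ diagonal c i d n ↔ (∃ s, AllRevoked c (Encodable.encode d) n s) ∧ v ∈ φ i n := by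
  simp only [diagonal, Part.mem_bind_iff]
  constructor
  · rintro ⟨s, hs, hv⟩
    exact ⟨⟨s, by simpa using Nat.rfind_spec hs⟩, hv⟩
  · rintro ⟨hex, hv⟩
    exact ⟨_, Part.get_mem (Nat.rfind_dom'.mpr (by simpa using hex)), hv⟩

theorem partrec₂_diagonal (c : Code) (i : ℕ) : Partrec₂ (diagonal c i) := by
  have hsearch : Computable₂ fun (a : Code × ℕ) (s : ℕ) =>
      decide (AllRevoked c (Encodable.encode a.1) a.2 s) :=
    ((primrecPred_allRevoked c).decide.comp
      ((Primrec.encode.comp (Primrec.fst.comp Primrec.fst)).pair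
        ((Primrec.snd.comp Primrec.fst).pair Primrec.snd))).to_comp
  have hφ : Partrec (φ i) := eval_part.comp (Computable.const _) Computable.id
  exact (Partrec.rfind hsearch.partrec₂).bind (hφ.comp (Computable.snd.comp Computable.fst)).to₂

theorem not_allRevoked_of_lConv {c : Code} {x e : ℕ} (h : LConv (guesser c) x e) :
    ∃ N, ∀ n ≥ N, ∀ s, ¬ AllRevoked c e n s := by
  obtain ⟨u, hu, hafter⟩ := h
  obtain ⟨k, hk⟩ := evaln_complete.mp hu
  refine ⟨max (Nat.pair x u) k, fun n hn s ⟨hns, hall⟩ => ?_⟩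
  have hguess : evaln s c (Nat.pair x u) = some e :=
    evaln_mono ((le_max_right _ _).trans (hn.trans hns)) hk
  obtain ⟨t, -, hut, hdef, hne⟩ := hall _ ((le_max_left _ _).trans hn) hguess
  rw [Nat.unpair_pair] at hut hdef hne
  obtain ⟨w, hw⟩ := Option.ne_none_iff_exists'.mp hdef
  exact hne (hw ▸ congrArg some (hafter t hut w (evaln_sound hw)))

theorem eventually_revoked {c : Code} {e p : ℕ} (h : ¬ LConv (guesser c) p.unpair.1 e) :
    ∀ᶠ s in atTop, evaln s c p = some e → Revoked c e s p := by
  by_cases hp : e ∈ c.eval p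
  · have hp' : e ∈ guesser c p.unpair.1 p.unpair.2 := by rwa [guesser, Nat.pair_unpair]
    simp only [LConv, not_exists, not_and, not_forall] at h
    obtain ⟨t, hut, w, hw, hwe⟩ := h p.unpair.2 hp'
    obtain ⟨k, hk⟩ := evaln_complete.mp hw
    filter_upwards [eventually_ge_atTop (max k t)] with s hs _
    have hws : evaln s c (Nat.pair p.unpair.1 t) = some w :=
      evaln_mono ((le_max_left _ _).trans hs) hk
    exact ⟨t, (le_max_right _ _).trans hs, hut, by simp [hws], by simp [hws, hwe]⟩
  · exact Eventually.of_forall fun s hs => absurd (evaln_sound hs) hp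

theorem exists_allRevoked {c : Code} {e : ℕ} (h : ∀ x, ¬ LConv (guesser c) x e) (n : ℕ) :
    ∃ s, AllRevoked c e n s :=
  ((eventually_ge_atTop n).and
    ((eventually_all_finite (Set.finite_Iic n)).mpr fun _ _ => eventually_revoked (h _))).exists

end CompleteEnumeration

open CompleteEnumeration

theorem stmt13 (i : ℕ) (hi : ∀ m, ((φ i) m).Dom) :
    ¬ ∃ ψ : ℕ → ℕ →. ℕ, Partrec₂ ψ ∧
      ∀ j, (∀ m, φ j m = φ i m) ↔ ∃ x, LConv ψ x j := by
  rintro ⟨ψ, hψ, hspec⟩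
  obtain ⟨c, rfl⟩ := exists_guesser_eq hψ
  obtain ⟨d, hd⟩ := fixed_point₂ (partrec₂_diagonal c i)
  have hφd : φ (Encodable.encode d) = diagonal c i d := by
    rw [φ, Denumerable.ofNat_encode, hd]
  by_cases hlim : ∃ x, LConv (guesser c) x (Encodable.encode d)
  · obtain ⟨x, hx⟩ := hlim
    obtain ⟨N, hN⟩ := not_allRevoked_of_lConv hx
    obtain ⟨v, hv⟩ := Part.dom_iff_mem.mp (hi N)
    rw [← (hspec _).mpr ⟨x, hx⟩, hφd, mem_diagonal] at hv
    obtain ⟨s, hs⟩ := hv.1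
    exact hN N le_rfl s hs
  · refine hlim ((hspec _).mp fun m => Part.ext fun v => ?_)
    rw [hφd, mem_diagonal]
    exact and_iff_right (exists_allRevoked (not_exists.mp hlim) m)
end
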